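/- arXiv:2309.12933 — 7 statements merged into one kernel-verified Lean document; each statement's English description precedes it below -/
import Mathlib

section
/- For the representation u ↦ u^{⊗t} of the symmetric circulant unitary group CU_Sym(L) on (ℂ^L)^{⊗t}, each tensor product of Fourier vectors v^{(i_1)} ⊗ ⋯ ⊗ v^{(i_t)} spans a one-dimensional invariant (hence irreducible) subspace, and two such subspaces labeled by index tuples i and j carry equivalent representations if and only if there exist a permutation π ∈ S_t and signs s ∈ {±1}^t such that j = π(s_1 i_1, …, s_t i_t) modulo L. -/
open Matrix Complex

/-- Fourier vector of `ℂ^L`. -/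
noncomputable def fourierVec (L : ℕ) [NeZero L] (k : ZMod L) : ZMod L → ℂ :=
  fun j => (1 / Real.sqrt L : ℝ) * Complex.exp (2 * Real.pi * Complex.I * (k.val * j.val) / L)

/-- Eigenvalue of a circulant matrix `u` on the Fourier vector `v^{(k)}`. -/
noncomputable def circEig (L : ℕ) [NeZero L] (u : Matrix (ZMod L) (ZMod L) ℂ) (k : ZMod L) : ℂ :=
  ∑ m : ZMod L, u 0 m * Complex.exp (2 * Real.pi * Complex.I * (k.val * m.val) / L)


section aux
variable (L : ℕ) [NeZero L]

noncomputable def zetaC : ℂ := Complex.exp (2 * Real.pi * Complex.I / L)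

lemma zetaC_prim : IsPrimitiveRoot (zetaC L) L :=
  Complex.isPrimitiveRoot_exp L (NeZero.ne L)

lemma zetaC_pow_L : zetaC L ^ L = 1 := (zetaC_prim L).pow_eq_one

lemma zetaC_pow_congr {n m : ℕ} (h : n ≡ m [MOD L]) : zetaC L ^ n = zetaC L ^ m := by
  have h1 : ∀ n : ℕ, zetaC L ^ n = zetaC L ^ (n % L) := by
    intro n
    conv_lhs => rw [← Nat.div_add_mod n L, pow_add, pow_mul, zetaC_pow_L, one_pow, one_mul]
  rw [h1 n, h1 m, h]

noncomputable def chiC (z : ZMod L) : ℂ := zetaC L ^ z.val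

lemma chiC_congr {n : ℕ} {z : ZMod L} (h : (n : ZMod L) = z) : zetaC L ^ n = chiC L z := by
  refine zetaC_pow_congr L ?_
  rw [← ZMod.natCast_eq_natCast_iff]
  simp [ZMod.natCast_val, ZMod.cast_id, h]

end aux

section aux2
variable (L : ℕ) [NeZero L]

lemma chiC_add (a b : ZMod L) : chiC L (a + b) = chiC L a * chiC L b := by
  have h : zetaC L ^ (a.val + b.val) = chiC L (a + b) := by
    refine chiC_congr L ?_
    push_cast [ZMod.natCast_val, ZMod.cast_id]
    ring
  rw [← h, pow_add]
  rfl

lemma chiC_zero : chiC L 0 = 1 := by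
  simp [chiC, ZMod.val_zero]

lemma chiC_mul_neg (z : ZMod L) : chiC L z * chiC L (-z) = 1 := by
  rw [← chiC_add, add_neg_cancel, chiC_zero]

lemma exp_eq_chiC (m x : ZMod L) :
    Complex.exp (2 * Real.pi * Complex.I * (m.val * x.val) / L) = chiC L (m * x) := by
  have h1 : (2 * Real.pi * Complex.I * (m.val * x.val) / L) =
      (m.val * x.val : ℕ) * (2 * Real.pi * Complex.I / L) := by push_cast; ring
  rw [h1, Complex.exp_nat_mul]
  refine chiC_congr L ?_
  push_cast [ZMod.natCast_val, ZMod.cast_id]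
  ring

lemma chiC_abs (z : ZMod L) : ‖chiC L z‖ = 1 := by
  unfold chiC zetaC
  rw [norm_pow]
  have : ‖Complex.exp (2 * Real.pi * Complex.I / L)‖ = 1 := by
    rw [Complex.norm_exp]
    have : (2 * Real.pi * Complex.I / L).re = 0 := by
      simp [Complex.div_re]
    simp [this]
  rw [this, one_pow]

lemma conj_chiC (z : ZMod L) : (starRingEnd ℂ) (chiC L z) = chiC L (-z) := by
  have h1 := chiC_mul_neg L z
  have h2 : (starRingEnd ℂ) (chiC L z) * chiC L z = 1 := by
    rw [mul_comm, Complex.mul_conj]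
    norm_cast
    rw [Complex.normSq_eq_norm_sq, chiC_abs, one_pow]
  have h3 : chiC L z ≠ 0 := by
    intro h; rw [h] at h1; simp at h1
  have h4 : chiC L (-z) * chiC L z = 1 := by rw [mul_comm]; exact h1
  exact mul_right_cancel₀ h3 (h2.trans h4.symm)

lemma chiC_ne_one {z : ZMod L} (hz : z ≠ 0) : chiC L z ≠ 1 := by
  unfold chiC
  exact (zetaC_prim L).pow_ne_one_of_pos_of_lt
    (fun h => hz (by rwa [← ZMod.val_eq_zero])) (ZMod.val_lt z)

lemma sum_chiC_mul (m : ZMod L) :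
    ∑ z : ZMod L, chiC L (m * z) = if m = 0 then (L : ℂ) else 0 := by
  by_cases hm : m = 0
  · simp [hm, chiC_zero, Finset.card_univ, ZMod.card]
  · simp only [hm, if_false]
    have key : chiC L m * (∑ z : ZMod L, chiC L (m * z)) = ∑ z : ZMod L, chiC L (m * z) := by
      rw [Finset.mul_sum]
      rw [← Equiv.sum_comp (Equiv.addRight (1 : ZMod L)) (fun z => chiC L (m * z))]
      refine Finset.sum_congr rfl fun z _ => ?_
      simp only [Equiv.coe_addRight]
      rw [mul_add, mul_one, chiC_add, mul_comm]
    have := sub_eq_zero.mpr key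
    have h2 : (chiC L m - 1) * (∑ z : ZMod L, chiC L (m * z)) = 0 := by
      rw [sub_mul, one_mul, this]
    rcases mul_eq_zero.mp h2 with h | h
    · exact absurd (sub_eq_zero.mp h) (chiC_ne_one L hm)
    · exact h

end aux2

section aux3
variable (L : ℕ) [NeZero L]

/-- circulant symmetric matrix with prescribed Fourier eigenvalues ν. -/
noncomputable def Umat (ν : ZMod L → ℂ) : Matrix (ZMod L) (ZMod L) ℂ :=
  Matrix.of fun a b => (1 / L : ℂ) * ∑ m : ZMod L, ν m * chiC L (m * (a - b))

lemma Umat_circ (ν : ZMod L → ℂ) (a b k : ZMod L) :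
    Umat L ν (a + k) (b + k) = Umat L ν a b := by
  simp [Umat, add_sub_add_right_eq_sub]

lemma Umat_symm (ν : ZMod L → ℂ) (h1 : ∀ m, ν (-m) = ν m) : (Umat L ν)ᵀ = Umat L ν := by
  ext a b
  simp only [Matrix.transpose_apply, Umat, Matrix.of_apply]
  congr 1
  rw [← Equiv.sum_comp (Equiv.neg (ZMod L)) (fun m => ν m * chiC L (m * (b - a)))]
  refine Finset.sum_congr rfl fun m _ => ?_
  simp only [Equiv.neg_apply]
  rw [h1]
  congr 2
  ring

lemma Umat_eig (ν : ZMod L → ℂ) (k : ZMod L) : circEig L (Umat L ν) k = ν k := by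
  unfold circEig
  have hL0 : (L : ℂ) ≠ 0 := Nat.cast_ne_zero.mpr (NeZero.ne L)
  calc ∑ x : ZMod L, Umat L ν 0 x * Complex.exp (2 * Real.pi * Complex.I * (k.val * x.val) / L)
      = ∑ x : ZMod L, (1 / L : ℂ) * ∑ m : ZMod L, ν m * (chiC L (m * (0 - x)) * chiC L (k * x)) := by
        refine Finset.sum_congr rfl fun x _ => ?_
        rw [exp_eq_chiC]
        simp only [Umat, Matrix.of_apply]
        rw [mul_assoc, Finset.sum_mul]
        congr 1
        refine Finset.sum_congr rfl fun m _ => by ring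
    _ = (1 / L : ℂ) * ∑ x : ZMod L, ∑ m : ZMod L, ν m * (chiC L (m * (0 - x)) * chiC L (k * x)) := by
        rw [Finset.mul_sum]
    _ = (1 / L : ℂ) * ∑ m : ZMod L, ν m * ∑ x : ZMod L, chiC L ((k - m) * x) := by
        congr 1
        rw [Finset.sum_comm]
        refine Finset.sum_congr rfl fun m _ => ?_
        rw [Finset.mul_sum]
        refine Finset.sum_congr rfl fun x _ => ?_
        rw [← chiC_add]
        congr 1
        ring
    _ = ν k := by
        simp only [sum_chiC_mul, sub_eq_zero, mul_ite, mul_zero]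
        rw [Finset.sum_ite_eq Finset.univ k (fun m => ν m * L)]
        simp only [Finset.mem_univ, if_true]
        field_simp

end aux3

section aux4
variable (L : ℕ) [NeZero L]

lemma Umat_unitary (ν : ZMod L → ℂ) (h2 : ∀ m, (starRingEnd ℂ) (ν m) * ν m = 1) :
    Umat L ν ∈ Matrix.unitaryGroup (ZMod L) ℂ := by
  rw [Matrix.mem_unitaryGroup_iff']
  ext a b
  have hL0 : (L : ℂ) ≠ 0 := Nat.cast_ne_zero.mpr (NeZero.ne L)
  have hstar : ∀ c : ZMod L, (star (Umat L ν)) a c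
      = (1 / L : ℂ) * ∑ m : ZMod L, (starRingEnd ℂ) (ν m) * chiC L (-(m * (c - a))) := by
    intro c
    rw [Matrix.star_apply]
    show (starRingEnd ℂ) (Umat L ν c a) = _
    simp only [Umat, Matrix.of_apply, _root_.map_mul, map_sum, map_div₀, _root_.map_one,
      map_natCast, conj_chiC]
  calc (star (Umat L ν) * Umat L ν) a b
      = ∑ c : ZMod L, ((1 / L : ℂ) * ∑ m : ZMod L, (starRingEnd ℂ) (ν m) * chiC L (-(m * (c - a))))
          * ((1 / L : ℂ) * ∑ n : ZMod L, ν n * chiC L (n * (c - b))) := by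
        rw [Matrix.mul_apply]
        exact Finset.sum_congr rfl fun c _ => by rw [hstar c]; rfl
    _ = (1 / L : ℂ) * (1 / L : ℂ) * ∑ c : ZMod L, ∑ m : ZMod L, ∑ n : ZMod L,
          ((starRingEnd ℂ) (ν m) * ν n) * (chiC L (-(m * (c - a))) * chiC L (n * (c - b))) := by
        rw [Finset.mul_sum]
        refine Finset.sum_congr rfl fun c _ => ?_
        rw [mul_mul_mul_comm, Finset.sum_mul_sum]
        congr 1
        refine Finset.sum_congr rfl fun m _ => ?_
        refine Finset.sum_congr rfl fun n _ => by ring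
    _ = (1 / L : ℂ) * (1 / L : ℂ) * ∑ m : ZMod L, ∑ n : ZMod L,
          ((starRingEnd ℂ) (ν m) * ν n) * (chiC L (m * a) * chiC L (-(n * b)))
          * ∑ c : ZMod L, chiC L ((n - m) * c) := by
        congr 1
        rw [Finset.sum_comm]
        refine Finset.sum_congr rfl fun m _ => ?_
        rw [Finset.sum_comm]
        refine Finset.sum_congr rfl fun n _ => ?_
        rw [Finset.mul_sum]
        refine Finset.sum_congr rfl fun c _ => ?_
        rw [← chiC_add, ← chiC_add]
        conv_rhs => rw [mul_assoc, ← chiC_add]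
        congr 1
        congr 1
        ring
    _ = (1 / L : ℂ) * (1 / L : ℂ) * ∑ m : ZMod L,
          ((starRingEnd ℂ) (ν m) * ν m) * (chiC L (m * a) * chiC L (-(m * b))) * L := by
        congr 1
        refine Finset.sum_congr rfl fun m _ => ?_
        simp only [sum_chiC_mul, sub_eq_zero, mul_ite, mul_zero]
        rw [Finset.sum_ite_eq' Finset.univ m
          (fun n => (starRingEnd ℂ) (ν m) * ν n * (chiC L (m * a) * chiC L (-(n * b))) * L)]
        simp
    _ = (1 / L : ℂ) * ∑ m : ZMod L, chiC L (m * (a - b)) := by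
        rw [Finset.mul_sum, Finset.mul_sum]
        refine Finset.sum_congr rfl fun m _ => ?_
        rw [h2 m]
        have : chiC L (m * a) * chiC L (-(m * b)) = chiC L (m * (a - b)) := by
          rw [← chiC_add]; congr 1; ring
        rw [this]
        field_simp
    _ = (1 : Matrix (ZMod L) (ZMod L) ℂ) a b := by
        have : ∑ m : ZMod L, chiC L (m * (a - b))
            = ∑ m : ZMod L, chiC L ((a - b) * m) :=
          Finset.sum_congr rfl fun m _ => by rw [mul_comm]
        rw [this, sum_chiC_mul, Matrix.one_apply]
        by_cases h : a = b
        · simp [h, sub_eq_zero, hL0]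
        · simp [h, sub_eq_zero]

end aux4

section aux5
variable (L : ℕ) [NeZero L]

lemma fourierVec_eq (k x : ZMod L) :
    fourierVec L k x = (1 / Real.sqrt L : ℝ) * chiC L (k * x) := by
  rw [fourierVec, exp_eq_chiC]

lemma circEig_eq (u : Matrix (ZMod L) (ZMod L) ℂ) (k : ZMod L) :
    circEig L u k = ∑ m : ZMod L, u 0 m * chiC L (k * m) := by
  unfold circEig
  exact Finset.sum_congr rfl fun m _ => by rw [exp_eq_chiC]

/-- single-site eigenvector equation -/
lemma eig_single (u : Matrix (ZMod L) (ZMod L) ℂ)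
    (hc : ∀ a b k : ZMod L, u (a + k) (b + k) = u a b) (k x : ZMod L) :
    ∑ y : ZMod L, u x y * fourierVec L k y = circEig L u k * fourierVec L k x := by
  have hshift : ∀ y : ZMod L, u x y = u 0 (y - x) := by
    intro y
    have := hc 0 (y - x) x
    rw [zero_add, sub_add_cancel] at this
    exact this
  calc ∑ y : ZMod L, u x y * fourierVec L k y
      = ∑ y : ZMod L, u 0 (y - x) * fourierVec L k y :=
        Finset.sum_congr rfl fun y _ => by rw [hshift y]
    _ = ∑ y : ZMod L, u 0 y * fourierVec L k (y + x) := by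
        rw [← Equiv.sum_comp (Equiv.addRight x) (fun y => u 0 (y - x) * fourierVec L k y)]
        refine Finset.sum_congr rfl fun y _ => by simp
    _ = circEig L u k * fourierVec L k x := by
        rw [circEig_eq, Finset.sum_mul]
        refine Finset.sum_congr rfl fun y _ => ?_
        rw [fourierVec_eq, fourierVec_eq,
          show k * (y + x) = k * y + k * x by ring, chiC_add]
        ring

/-- eigenvalue symmetry under k → -k for symmetric circulant u -/
lemma circEig_neg (u : Matrix (ZMod L) (ZMod L) ℂ)
    (hc : ∀ a b k : ZMod L, u (a + k) (b + k) = u a b) (hs : uᵀ = u) (k : ZMod L) :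
    circEig L u (-k) = circEig L u k := by
  rw [circEig_eq, circEig_eq]
  rw [← Equiv.sum_comp (Equiv.neg (ZMod L)) (fun m => u 0 m * chiC L (k * m))]
  refine Finset.sum_congr rfl fun m _ => ?_
  simp only [Equiv.neg_apply]
  have h1 : u 0 (-m) = u 0 m := by
    have h2 := hc 0 (-m) m
    rw [zero_add, neg_add_cancel] at h2
    have h3 : u m 0 = u 0 m := by
      conv_lhs => rw [← hs]
      rfl
    rw [← h2, h3]
  rw [h1]
  congr 1
  rw [show -k * m = k * (-m) by ring]

end aux5

section comb
variable (L : ℕ) [NeZero L]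

def negSetoid : Setoid (ZMod L) where
  r := fun x y => x = y ∨ x = -y
  iseqv := by
    refine ⟨fun x => Or.inl rfl, ?_, ?_⟩
    · rintro x y (rfl | rfl)
      · exact Or.inl rfl
      · exact Or.inr (neg_neg y).symm
    · rintro x y z (rfl | rfl) (h | h) <;> simp [h]

instance : DecidableRel (negSetoid L).r :=
  fun x y => inferInstanceAs (Decidable (x = y ∨ x = -y))

lemma exists_perm (t : ℕ) (f g : Fin t → ZMod L)
    (h : ∀ k : ZMod L, (Finset.univ.filter (fun a => f a = k ∨ f a = -k)).card
        = (Finset.univ.filter (fun a => g a = k ∨ g a = -k)).card) :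
    ∃ π : Equiv.Perm (Fin t), ∀ a, g a = f (π a) ∨ g a = -(f (π a)) := by
  classical
  set s := negSetoid L with hs
  let f' : Fin t → Quotient s := fun a => Quotient.mk s (f a)
  let g' : Fin t → Quotient s := fun a => Quotient.mk s (g a)
  have hcard : ∀ c : Quotient s, Fintype.card {a // g' a = c} = Fintype.card {a // f' a = c} := by
    intro c
    obtain ⟨k, rfl⟩ := Quotient.exists_rep c
    have key : ∀ (p : Fin t → ZMod L) (a : Fin t),
        (Quotient.mk s (p a) = Quotient.mk s k) ↔ (p a = k ∨ p a = -k) := by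
      intro p a
      rw [Quotient.eq]
      exact Iff.rfl
    rw [Fintype.card_subtype, Fintype.card_subtype]
    rw [show Finset.univ.filter (fun a => g' a = Quotient.mk s k)
        = Finset.univ.filter (fun a => g a = k ∨ g a = -k) from
      Finset.filter_congr fun a _ => key g a]
    rw [show Finset.univ.filter (fun a => f' a = Quotient.mk s k)
        = Finset.univ.filter (fun a => f a = k ∨ f a = -k) from
      Finset.filter_congr fun a _ => key f a]
    exact (h k).symm
  let e : ∀ c : Quotient s, {a // g' a = c} ≃ {a // f' a = c} :=
    fun c => Fintype.equivOfCardEq (hcard c)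
  let π : Equiv.Perm (Fin t) :=
    ((Equiv.sigmaFiberEquiv g').symm.trans (Equiv.sigmaCongrRight e)).trans
      (Equiv.sigmaFiberEquiv f')
  refine ⟨π, fun a => ?_⟩
  have h1 : f' (π a) = g' a := by
    show f' ((e (g' a) ⟨a, rfl⟩ : {x // f' x = g' a}) : Fin t) = g' a
    exact (e (g' a) ⟨a, rfl⟩).2
  have h2 : (negSetoid L).r (f (π a)) (g a) := Quotient.exact h1
  rcases h2 with h2 | h2
  · exact Or.inl h2.symm
  · exact Or.inr (by rw [h2, neg_neg])

end comb


/-- For the representation `u ↦ u^{⊗t}` of `CU_Sym(L)` (`L` odd), each tensor product of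
Fourier vectors `v^{(i_1)} ⊗ ⋯ ⊗ v^{(i_t)}` is a common eigenvector (spanning a
one-dimensional invariant, hence irreducible, subspace) with eigenvalue `∏_a λ_{i_a}(u)`;
and the representations labelled by tuples `i`, `j` are equivalent (equal characters) iff
`j = π(s_1 i_1, …, s_t i_t)` for some permutation `π ∈ S_t` and signs `s ∈ {±1}^t` mod `L`. -/
theorem fourier_tensor_irreps_of_CUSym (L : ℕ) [NeZero L] (hL : Odd L) (t : ℕ)
    (i j : Fin t → ZMod L) :
    (∀ u : Matrix (ZMod L) (ZMod L) ℂ,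
      u ∈ Matrix.unitaryGroup (ZMod L) ℂ →
      (∀ a b k : ZMod L, u (a + k) (b + k) = u a b) → uᵀ = u →
      (Matrix.of fun (x y : Fin t → ZMod L) => ∏ a : Fin t, u (x a) (y a)).mulVec
          (fun x : Fin t → ZMod L => ∏ a : Fin t, fourierVec L (i a) (x a))
        = (∏ a : Fin t, circEig L u (i a)) •
          (fun x : Fin t → ZMod L => ∏ a : Fin t, fourierVec L (i a) (x a))) ∧
    ((∀ u : Matrix (ZMod L) (ZMod L) ℂ,
        u ∈ Matrix.unitaryGroup (ZMod L) ℂ →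
        (∀ a b k : ZMod L, u (a + k) (b + k) = u a b) → uᵀ = u →
        ∏ a : Fin t, circEig L u (i a) = ∏ a : Fin t, circEig L u (j a)) ↔
      ∃ π : Equiv.Perm (Fin t), ∀ a : Fin t, j a = i (π a) ∨ j a = -(i (π a))) := by
  classical
  constructor
  · -- part 1 : eigenvector equation
    intro u hu hc hs
    funext x
    simp only [Matrix.mulVec, dotProduct, Matrix.of_apply, Pi.smul_apply,
      smul_eq_mul]
    calc ∑ y : Fin t → ZMod L, (∏ a, u (x a) (y a)) * ∏ a, fourierVec L (i a) (y a)
        = ∑ y : Fin t → ZMod L, ∏ a, (u (x a) (y a) * fourierVec L (i a) (y a)) :=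
          Finset.sum_congr rfl fun y _ => (Finset.prod_mul_distrib).symm
      _ = ∏ a, ∑ b : ZMod L, u (x a) b * fourierVec L (i a) b :=
          (Fintype.prod_sum fun a b => u (x a) b * fourierVec L (i a) b).symm
      _ = ∏ a, (circEig L u (i a) * fourierVec L (i a) (x a)) :=
          Finset.prod_congr rfl fun a _ => eig_single L u hc (i a) (x a)
      _ = (∏ a, circEig L u (i a)) * ∏ a, fourierVec L (i a) (x a) :=
          Finset.prod_mul_distrib
  · constructor
    · -- forward direction
      intro H
      refine exists_perm L t i j fun k => ?_
      set c : ℂ := Complex.exp (2 * Real.pi * Complex.I / ((t+1 : ℕ) : ℂ)) with hcdef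
      have hprim : IsPrimitiveRoot c (t+1) :=
        Complex.isPrimitiveRoot_exp (t+1) (Nat.succ_ne_zero t)
      set ν : ZMod L → ℂ := fun m => if m = k ∨ m = -k then c else 1 with hν
      have hiff : ∀ m : ZMod L, (-m = k ∨ -m = -k) ↔ (m = k ∨ m = -k) := by
        intro m
        constructor
        · rintro (h | h)
          · exact Or.inr (by rw [← h, neg_neg])
          · exact Or.inl (neg_injective h)
        · rintro (rfl | rfl)
          · exact Or.inr rfl
          · exact Or.inl (neg_neg k)
      have h1 : ∀ m, ν (-m) = ν m := fun m => if_congr (hiff m) rfl rfl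
      have hc1 : (starRingEnd ℂ) c * c = 1 := by
        rw [hcdef, ← Complex.exp_conj, ← Complex.exp_add, ← Complex.exp_zero]
        congr 1
        simp only [map_div₀, _root_.map_mul, Complex.conj_I, Complex.conj_ofReal,
          map_natCast, map_ofNat]
        ring
      have h2 : ∀ m, (starRingEnd ℂ) (ν m) * ν m = 1 := by
        intro m
        by_cases hm : m = k ∨ m = -k
        · simp only [hν, if_pos hm]; exact hc1
        · simp only [hν, if_neg hm, mul_one, _root_.map_one]
      have key := H (Umat L ν) (Umat_unitary L ν h2) (Umat_circ L ν) (Umat_symm L ν h1)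
      simp only [Umat_eig] at key
      have hprod : ∀ f : Fin t → ZMod L, (∏ a, ν (f a))
          = c ^ (Finset.univ.filter (fun a => f a = k ∨ f a = -k)).card := by
        intro f
        rw [show (∏ a, ν (f a)) = ∏ a, (if f a = k ∨ f a = -k then c else 1) from rfl]
        rw [Finset.prod_ite, Finset.prod_const, Finset.prod_const, one_pow, mul_one]
      rw [hprod i, hprod j] at key
      have hlt : ∀ f : Fin t → ZMod L,
          (Finset.univ.filter (fun a => f a = k ∨ f a = -k)).card < t + 1 := by
        intro f
        exact Nat.lt_succ_of_le (le_trans (Finset.card_filter_le _ _)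
          (by rw [Finset.card_univ, Fintype.card_fin]))
      exact hprim.pow_inj (hlt i) (hlt j) key
    · -- backward direction
      rintro ⟨π, hπ⟩ u hu hc hs
      have heach : ∀ a, circEig L u (j a) = circEig L u (i (π a)) := by
        intro a
        rcases hπ a with h | h
        · rw [h]
        · rw [h]; exact circEig_neg L u hc hs (i (π a))
      rw [Finset.prod_congr rfl fun a _ => heach a,
        Equiv.prod_comp π (fun a => circEig L u (i a))]
end

section
/- The commutant of {u^{⊗t} : u ∈ CU_Sym(L)} in the matrix algebra on (ℂ^L)^{⊗t} is spanned by the rank-one operators (v^{(i_1)} ⊗ ⋯ ⊗ v^{(i_t)})(v^{(j_1)} ⊗ ⋯ ⊗ v^{(j_t)})† over all pairs of index tuples i, j with i ∼ j, where i ∼ j means j = π(s_1 i_1, …, s_t i_t) for some permutation π ∈ S_t and signs s ∈ {±1}^t (indices modulo L); moreover these spanning operators form an orthonormal family with respect to the Hilbert–Schmidt inner product. -/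
open Matrix Complex Finset

namespace CUSymAux

variable (L : ℕ) [NeZero L]

noncomputable def χ : ZMod L → ℂ := fun n => ZMod.stdAddChar n

lemma chi_add (a b : ZMod L) : χ L (a + b) = χ L a * χ L b := AddChar.map_add_eq_mul _ a b

lemma chi_zero : χ L 0 = 1 := AddChar.map_zero_eq_one _

lemma chi_natCast (n : ℕ) : χ L (n : ZMod L) = Complex.exp (2 * Real.pi * Complex.I * n / L) := by
  have h := ZMod.stdAddChar_coe (N := L) (n : ℤ)
  push_cast at h
  simpa [χ] using h

lemma fourierVec_eq (k x : ZMod L) :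
    fourierVec L k x = (1 / Real.sqrt L : ℝ) * χ L (k * x) := by
  have : (k * x : ZMod L) = ((k.val * x.val : ℕ) : ZMod L) := by
    push_cast [ZMod.natCast_val, ZMod.cast_id]
    rfl
  rw [fourierVec, this, chi_natCast]
  push_cast
  ring_nf

lemma chi_neg (m : ZMod L) : χ L (-m) = (starRingEnd ℂ) (χ L m) := by
  have h1 : χ L m * χ L (-m) = 1 := by rw [← chi_add, add_neg_cancel, chi_zero]
  have h2 : χ L m * (starRingEnd ℂ) (χ L m) = 1 := by
    rw [Complex.mul_conj]
    norm_cast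
    rw [χ, ZMod.stdAddChar_apply]
    have hn : ‖((ZMod.toCircle m : Circle) : ℂ)‖ = 1 := Circle.norm_coe _
    simp [Complex.normSq_eq_norm_sq, hn]
  have h3 : χ L m ≠ 0 := by
    intro h; rw [h, zero_mul] at h1; exact one_ne_zero h1.symm
  have := h1.trans h2.symm
  exact mul_left_cancel₀ h3 this

lemma sum_chi (b : ZMod L) : ∑ x : ZMod L, χ L (x * b) = if b = 0 then (L : ℂ) else 0 := by
  classical
  have := AddChar.sum_mulShift (ψ := ZMod.stdAddChar (N := L)) b (ZMod.isPrimitive_stdAddChar L)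
  simpa [χ, ZMod.card] using this

end CUSymAux
noncomputable def fourierTensor (L : ℕ) [NeZero L] (t : ℕ) (i : Fin t → ZMod L) :
    (Fin t → ZMod L) → ℂ :=
  fun x => ∏ a : Fin t, fourierVec L (i a) (x a)

noncomputable def fourierRankOne (L : ℕ) [NeZero L] (t : ℕ) (i j : Fin t → ZMod L) :
    Matrix (Fin t → ZMod L) (Fin t → ZMod L) ℂ :=
  Matrix.of fun x y => fourierTensor L t i x * starRingEnd ℂ (fourierTensor L t j y)

def tupleEquiv (L : ℕ) (t : ℕ) (i j : Fin t → ZMod L) : Prop :=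
  ∃ π : Equiv.Perm (Fin t), ∀ a : Fin t, j a = i (π a) ∨ j a = -(i (π a))

namespace CUSymAux

variable (L : ℕ) [NeZero L]

lemma sqrt_ne : (Real.sqrt L : ℂ) ≠ 0 := by
  have : (0:ℝ) < L := by exact_mod_cast Nat.pos_of_ne_zero (NeZero.ne L)
  exact_mod_cast (Real.sqrt_pos.mpr this).ne'

lemma inv_sqrt_sq : ((1 / Real.sqrt L : ℝ) : ℂ) * ((1 / Real.sqrt L : ℝ) : ℂ) = 1 / L := by
  have : (0:ℝ) ≤ (L:ℝ) := by positivity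
  push_cast
  rw [div_mul_div_comm, one_mul, ← Complex.ofReal_mul, Real.mul_self_sqrt this]
  simp

lemma conj_fourierVec (k x : ZMod L) :
    (starRingEnd ℂ) (fourierVec L k x) = fourierVec L (-k) x := by
  rw [fourierVec_eq, fourierVec_eq, _root_.map_mul, Complex.conj_ofReal, ← chi_neg, neg_mul]

lemma fourierVec_orthonormal (k m : ZMod L) :
    ∑ x : ZMod L, (starRingEnd ℂ) (fourierVec L k x) * fourierVec L m x
      = if k = m then 1 else 0 := by
  classical
  have : ∀ x : ZMod L, (starRingEnd ℂ) (fourierVec L k x) * fourierVec L m x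
      = (1 / L : ℂ) * χ L (x * (m - k)) := by
    intro x
    rw [conj_fourierVec, fourierVec_eq, fourierVec_eq, mul_mul_mul_comm, inv_sqrt_sq,
      ← chi_add]
    ring_nf
  rw [Finset.sum_congr rfl (fun x _ => this x), ← Finset.mul_sum, sum_chi]
  have hL : (L:ℂ) ≠ 0 := by exact_mod_cast (NeZero.ne L)
  by_cases h : k = m
  · subst h; simp [hL]
  · rw [if_neg (sub_ne_zero.mpr (fun hh => h hh.symm)), if_neg h, mul_zero]

lemma fourierVec_complete (x y : ZMod L) :
    ∑ k : ZMod L, (starRingEnd ℂ) (fourierVec L k x) * fourierVec L k y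
      = if x = y then 1 else 0 := by
  classical
  have : ∀ k : ZMod L, (starRingEnd ℂ) (fourierVec L k x) * fourierVec L k y
      = (1 / L : ℂ) * χ L (k * (y - x)) := by
    intro k
    rw [conj_fourierVec, fourierVec_eq, fourierVec_eq, mul_mul_mul_comm, inv_sqrt_sq,
      ← chi_add]
    ring_nf
  rw [Finset.sum_congr rfl (fun k _ => this k), ← Finset.mul_sum, sum_chi]
  have hL : (L:ℂ) ≠ 0 := by exact_mod_cast (NeZero.ne L)
  by_cases h : x = y
  · subst h; simp [hL]
  · rw [if_neg (sub_ne_zero.mpr (fun hh => h hh.symm)), if_neg h, mul_zero]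

variable (t : ℕ)

lemma conj_fourierTensor (i : Fin t → ZMod L) (x : Fin t → ZMod L) :
    (starRingEnd ℂ) (fourierTensor L t i x) = fourierTensor L t (-i) x := by
  rw [fourierTensor, map_prod]
  exact Finset.prod_congr rfl fun a _ => conj_fourierVec L (i a) (x a)

lemma fourierTensor_orthonormal (i i' : Fin t → ZMod L) :
    ∑ x : Fin t → ZMod L, (starRingEnd ℂ) (fourierTensor L t i x) * fourierTensor L t i' x
      = if i = i' then 1 else 0 := by
  classical
  have : ∀ x : Fin t → ZMod L, (starRingEnd ℂ) (fourierTensor L t i x) * fourierTensor L t i' x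
      = ∏ a : Fin t, (starRingEnd ℂ) (fourierVec L (i a) (x a)) * fourierVec L (i' a) (x a) := by
    intro x
    rw [fourierTensor, fourierTensor, map_prod, ← Finset.prod_mul_distrib]
  rw [Finset.sum_congr rfl (fun x _ => this x), ← Fintype.prod_sum
    (f := fun a c => (starRingEnd ℂ) (fourierVec L (i a) c) * fourierVec L (i' a) c)]
  rw [Finset.prod_congr rfl (fun a _ => fourierVec_orthonormal L (i a) (i' a))]
  by_cases h : i = i'
  · simp [h]
  · obtain ⟨a, ha⟩ := Function.ne_iff.mp h
    rw [if_neg h]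
    exact Finset.prod_eq_zero (Finset.mem_univ a) (by rw [if_neg ha])

lemma fourierTensor_complete (x y : Fin t → ZMod L) :
    ∑ i : Fin t → ZMod L, (starRingEnd ℂ) (fourierTensor L t i x) * fourierTensor L t i y
      = if x = y then 1 else 0 := by
  classical
  have : ∀ i : Fin t → ZMod L, (starRingEnd ℂ) (fourierTensor L t i x) * fourierTensor L t i y
      = ∏ a : Fin t, (starRingEnd ℂ) (fourierVec L (i a) (x a)) * fourierVec L (i a) (y a) := by
    intro i
    rw [fourierTensor, fourierTensor, map_prod, ← Finset.prod_mul_distrib]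
  rw [Finset.sum_congr rfl (fun i _ => this i), ← Fintype.prod_sum
    (f := fun a k => (starRingEnd ℂ) (fourierVec L k (x a)) * fourierVec L k (y a))]
  rw [Finset.prod_congr rfl (fun a _ => fourierVec_complete L (x a) (y a))]
  by_cases h : x = y
  · simp [h]
  · obtain ⟨a, ha⟩ := Function.ne_iff.mp h
    rw [if_neg h]
    exact Finset.prod_eq_zero (Finset.mem_univ a) (by rw [if_neg ha])

end CUSymAux
namespace CUSymAux

variable (L : ℕ) [NeZero L]

noncomputable def lam (u : Matrix (ZMod L) (ZMod L) ℂ) (k : ZMod L) : ℂ :=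
  ∑ d : ZMod L, u d 0 * χ L (-(k * d))

lemma mulVec_eigen (u : Matrix (ZMod L) (ZMod L) ℂ)
    (hcirc : ∀ a b k : ZMod L, u (a + k) (b + k) = u a b) (k : ZMod L) :
    u *ᵥ fourierVec L k = lam L u k • fourierVec L k := by
  funext a
  have key : ∀ b : ZMod L, u a b * fourierVec L k b
      = u (a - b) 0 * fourierVec L k b := by
    intro b
    have := hcirc (a - b) 0 b
    rw [sub_add_cancel, zero_add] at this
    rw [this]
  have hMV : (u *ᵥ fourierVec L k) a = ∑ b : ZMod L, u a b * fourierVec L k b := rfl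
  rw [hMV, Finset.sum_congr rfl (fun b _ => key b)]
  rw [← Equiv.sum_comp (Equiv.subLeft a) (fun b => u (a - b) 0 * fourierVec L k b)]
  have term : ∀ d : ZMod L, u (a - (Equiv.subLeft a d)) 0 * fourierVec L k (Equiv.subLeft a d)
      = (u d 0 * χ L (-(k * d))) * fourierVec L k a := by
    intro d
    have h1 : a - (a - d) = d := by ring
    have h2 : fourierVec L k (a - d) = fourierVec L k a * χ L (-(k * d)) := by
      rw [fourierVec_eq, fourierVec_eq, mul_assoc, ← chi_add]
      ring_nf
    simp only [Equiv.subLeft_apply, h1, h2]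
    ring
  rw [Finset.sum_congr rfl (fun d _ => term d), ← Finset.sum_mul]
  simp [lam, Pi.smul_apply, smul_eq_mul]

lemma entry_neg (u : Matrix (ZMod L) (ZMod L) ℂ)
    (hcirc : ∀ a b k : ZMod L, u (a + k) (b + k) = u a b) (hsym : uᵀ = u) (d : ZMod L) :
    u (-d) 0 = u d 0 := by
  have h1 := hcirc (-d) 0 d
  rw [neg_add_cancel, zero_add] at h1
  have h2 : uᵀ d 0 = u d 0 := by rw [hsym]
  rw [← h1, ← h2]
  rfl

lemma lam_neg (u : Matrix (ZMod L) (ZMod L) ℂ)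
    (hcirc : ∀ a b k : ZMod L, u (a + k) (b + k) = u a b) (hsym : uᵀ = u) (k : ZMod L) :
    lam L u (-k) = lam L u k := by
  rw [lam, lam]
  rw [← Equiv.sum_comp (Equiv.neg (ZMod L)) (fun d => u d 0 * χ L (-(-k * d)))]
  refine Finset.sum_congr rfl fun d _ => ?_
  rw [Equiv.neg_apply, entry_neg L u hcirc hsym]
  ring_nf

lemma vecMul_eigen (u : Matrix (ZMod L) (ZMod L) ℂ)
    (hcirc : ∀ a b k : ZMod L, u (a + k) (b + k) = u a b) (hsym : uᵀ = u) (k : ZMod L) :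
    fourierVec L k ᵥ* u = lam L u k • fourierVec L k := by
  conv_lhs => rw [← hsym]
  rw [Matrix.vecMul_transpose]
  exact mulVec_eigen L u hcirc k

variable (t : ℕ)

noncomputable def Mpow (u : Matrix (ZMod L) (ZMod L) ℂ) :
    Matrix (Fin t → ZMod L) (Fin t → ZMod L) ℂ :=
  Matrix.of fun x y => ∏ a : Fin t, u (x a) (y a)

lemma Mpow_mulVec (u : Matrix (ZMod L) (ZMod L) ℂ)
    (hcirc : ∀ a b k : ZMod L, u (a + k) (b + k) = u a b) (i : Fin t → ZMod L) :
    Mpow L t u *ᵥ fourierTensor L t i = (∏ a : Fin t, lam L u (i a)) • fourierTensor L t i := by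
  classical
  funext x
  have hMV : (Mpow L t u *ᵥ fourierTensor L t i) x
      = ∑ y : Fin t → ZMod L, (∏ a : Fin t, u (x a) (y a)) * ∏ a : Fin t, fourierVec L (i a) (y a) := rfl
  rw [hMV]
  have step : ∀ y : Fin t → ZMod L,
      (∏ a : Fin t, u (x a) (y a)) * ∏ a : Fin t, fourierVec L (i a) (y a)
      = ∏ a : Fin t, (u (x a) (y a) * fourierVec L (i a) (y a)) := by
    intro y; rw [← Finset.prod_mul_distrib]
  rw [Finset.sum_congr rfl (fun y _ => step y),
    ← Fintype.prod_sum (f := fun a c => u (x a) c * fourierVec L (i a) c)]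
  have eig : ∀ a : Fin t, (∑ c : ZMod L, u (x a) c * fourierVec L (i a) c)
      = lam L u (i a) * fourierVec L (i a) (x a) := by
    intro a
    have := congrFun (mulVec_eigen L u hcirc (i a)) (x a)
    simpa [Matrix.mulVec, dotProduct] using this
  rw [Finset.prod_congr rfl (fun a _ => eig a), Finset.prod_mul_distrib]
  simp [fourierTensor, Pi.smul_apply, smul_eq_mul]

lemma Mpow_vecMul (u : Matrix (ZMod L) (ZMod L) ℂ)
    (hcirc : ∀ a b k : ZMod L, u (a + k) (b + k) = u a b) (hsym : uᵀ = u) (i : Fin t → ZMod L) :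
    fourierTensor L t i ᵥ* Mpow L t u = (∏ a : Fin t, lam L u (i a)) • fourierTensor L t i := by
  classical
  funext y
  have hMV : (fourierTensor L t i ᵥ* Mpow L t u) y
      = ∑ x : Fin t → ZMod L, (∏ a : Fin t, fourierVec L (i a) (x a)) * ∏ a : Fin t, u (x a) (y a) := rfl
  rw [hMV]
  have step : ∀ x : Fin t → ZMod L,
      (∏ a : Fin t, fourierVec L (i a) (x a)) * ∏ a : Fin t, u (x a) (y a)
      = ∏ a : Fin t, (fourierVec L (i a) (x a) * u (x a) (y a)) := by
    intro x; rw [← Finset.prod_mul_distrib]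
  rw [Finset.sum_congr rfl (fun x _ => step x),
    ← Fintype.prod_sum (f := fun a c => fourierVec L (i a) c * u c (y a))]
  have eig : ∀ a : Fin t, (∑ c : ZMod L, fourierVec L (i a) c * u c (y a))
      = lam L u (i a) * fourierVec L (i a) (y a) := by
    intro a
    have := congrFun (vecMul_eigen L u hcirc hsym (i a)) (y a)
    simpa [Matrix.vecMul, dotProduct] using this
  rw [Finset.prod_congr rfl (fun a _ => eig a), Finset.prod_mul_distrib]
  simp [fourierTensor, Pi.smul_apply, smul_eq_mul]

end CUSymAux
namespace CUSymAux

variable (L : ℕ) [NeZero L]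

lemma fourierVec_complete' (a b : ZMod L) :
    ∑ k : ZMod L, fourierVec L k a * (starRingEnd ℂ) (fourierVec L k b)
      = if a = b then 1 else 0 := by
  have h := congrArg (starRingEnd ℂ) (fourierVec_complete L a b)
  rw [map_sum] at h
  simp only [_root_.map_mul, Complex.conj_conj, apply_ite (starRingEnd ℂ),
    RingHom.map_one, RingHom.map_zero] at h
  exact h

variable (t : ℕ)

lemma fourierTensor_complete' (x y : Fin t → ZMod L) :
    ∑ i : Fin t → ZMod L, fourierTensor L t i x * (starRingEnd ℂ) (fourierTensor L t i y)
      = if x = y then 1 else 0 := by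
  have h := congrArg (starRingEnd ℂ) (fourierTensor_complete L t x y)
  rw [map_sum] at h
  simp only [_root_.map_mul, Complex.conj_conj, apply_ite (starRingEnd ℂ),
    RingHom.map_one, RingHom.map_zero] at h
  exact h

noncomputable def Gmat : Matrix (Fin t → ZMod L) (Fin t → ZMod L) ℂ :=
  Matrix.of fun x i => fourierTensor L t i x

lemma Gmat_unitary_left : (Gmat L t)ᴴ * Gmat L t = 1 := by
  ext i j
  simp only [Matrix.mul_apply, Matrix.conjTranspose_apply, Gmat, Matrix.of_apply, Matrix.one_apply,
    star_def]
  rw [Finset.sum_congr rfl fun x _ => rfl]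
  exact fourierTensor_orthonormal L t i j

lemma Gmat_unitary_right : Gmat L t * (Gmat L t)ᴴ = 1 := by
  ext x y
  simp only [Matrix.mul_apply, Matrix.conjTranspose_apply, Gmat, Matrix.of_apply, Matrix.one_apply,
    star_def]
  exact fourierTensor_complete' L t x y

noncomputable def coeff (T : Matrix (Fin t → ZMod L) (Fin t → ZMod L) ℂ)
    (i j : Fin t → ZMod L) : ℂ :=
  ((Gmat L t)ᴴ * T * Gmat L t) i j

lemma sandwich_eq_sum (C : Matrix (Fin t → ZMod L) (Fin t → ZMod L) ℂ) :
    Gmat L t * C * (Gmat L t)ᴴ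
      = ∑ p : (Fin t → ZMod L) × (Fin t → ZMod L), C p.1 p.2 • fourierRankOne L t p.1 p.2 := by
  ext x y
  rw [Matrix.sum_apply]
  simp only [Matrix.smul_apply, fourierRankOne, Matrix.of_apply, smul_eq_mul]
  rw [Fintype.sum_prod_type]
  simp only [Matrix.mul_apply, Matrix.conjTranspose_apply, Gmat, Matrix.of_apply, star_def,
    Finset.sum_mul]
  rw [Finset.sum_comm]
  refine Finset.sum_congr rfl fun i _ => ?_
  refine Finset.sum_congr rfl fun j _ => ?_
  ring

lemma expansion (T : Matrix (Fin t → ZMod L) (Fin t → ZMod L) ℂ) :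
    T = ∑ p : (Fin t → ZMod L) × (Fin t → ZMod L),
      coeff L t T p.1 p.2 • fourierRankOne L t p.1 p.2 := by
  rw [← sandwich_eq_sum L t (coeff L t T)]
  unfold coeff
  calc T = (Gmat L t * (Gmat L t)ᴴ) * T * (Gmat L t * (Gmat L t)ᴴ) := by
        rw [Gmat_unitary_right, Matrix.one_mul, Matrix.mul_one]
    _ = Gmat L t * ((Gmat L t)ᴴ * T * Gmat L t) * (Gmat L t)ᴴ := by
        simp only [Matrix.mul_assoc]

lemma coeff_mul_right (T : Matrix (Fin t → ZMod L) (Fin t → ZMod L) ℂ)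
    (u : Matrix (ZMod L) (ZMod L) ℂ)
    (hcirc : ∀ a b k : ZMod L, u (a + k) (b + k) = u a b) (i j : Fin t → ZMod L) :
    coeff L t (T * Mpow L t u) i j = (∏ a : Fin t, lam L u (j a)) * coeff L t T i j := by
  unfold coeff
  have hcol : Mpow L t u * Gmat L t
      = Matrix.of fun z j' => (∏ a : Fin t, lam L u (j' a)) * fourierTensor L t j' z := by
    ext z j'
    have := congrFun (Mpow_mulVec L t u hcirc j') z
    simpa [Matrix.mul_apply, Matrix.mulVec, dotProduct, Gmat, Pi.smul_apply, smul_eq_mul]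
      using this
  have hassoc : (Gmat L t)ᴴ * (T * Mpow L t u) * Gmat L t
      = (Gmat L t)ᴴ * T * (Mpow L t u * Gmat L t) := by simp only [Matrix.mul_assoc]
  rw [hassoc, hcol]
  simp only [Matrix.mul_apply, Matrix.conjTranspose_apply, Gmat, Matrix.of_apply, star_def,
    Finset.mul_sum]
  refine Finset.sum_congr rfl fun x _ => ?_
  ring

lemma coeff_mul_left (T : Matrix (Fin t → ZMod L) (Fin t → ZMod L) ℂ)
    (u : Matrix (ZMod L) (ZMod L) ℂ)
    (hcirc : ∀ a b k : ZMod L, u (a + k) (b + k) = u a b) (hsym : uᵀ = u)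
    (i j : Fin t → ZMod L) :
    coeff L t (Mpow L t u * T) i j = (∏ a : Fin t, lam L u (i a)) * coeff L t T i j := by
  unfold coeff
  have hrow : (Gmat L t)ᴴ * Mpow L t u
      = Matrix.of fun i' z => (∏ a : Fin t, lam L u (i' a)) * (starRingEnd ℂ) (fourierTensor L t i' z) := by
    ext i' z
    have := congrFun (Mpow_vecMul L t u hcirc hsym (fun a => -(i' a))) z
    have hneg : ∀ w : Fin t → ZMod L, fourierTensor L t (fun a => -(i' a)) w
        = (starRingEnd ℂ) (fourierTensor L t i' w) := by
      intro w
      rw [conj_fourierTensor]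
      rfl
    have hlam : (∏ a : Fin t, lam L u (-(i' a))) = ∏ a : Fin t, lam L u (i' a) :=
      Finset.prod_congr rfl fun a _ => lam_neg L u hcirc hsym (i' a)
    simp only [Matrix.vecMul, dotProduct, hneg, Pi.smul_apply, smul_eq_mul, hlam] at this
    simpa [Matrix.mul_apply, Matrix.conjTranspose_apply, Gmat, star_def] using this
  have hassoc : (Gmat L t)ᴴ * (Mpow L t u * T) * Gmat L t
      = ((Gmat L t)ᴴ * Mpow L t u) * T * Gmat L t := by simp only [Matrix.mul_assoc]
  rw [hassoc, hrow]
  simp only [Matrix.mul_apply, Matrix.of_apply, Matrix.conjTranspose_apply, Gmat, star_def,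
    Finset.mul_sum, Finset.sum_mul]
  refine Finset.sum_congr rfl fun z _ => ?_
  refine Finset.sum_congr rfl fun x _ => ?_
  ring

end CUSymAux
namespace CUSymAux

variable (L : ℕ) [NeZero L]

lemma vec_pair (k a b : ZMod L) :
    fourierVec L k a * (starRingEnd ℂ) (fourierVec L k b) = (1 / L : ℂ) * χ L (k * a - k * b) := by
  rw [conj_fourierVec, fourierVec_eq, fourierVec_eq, mul_mul_mul_comm, inv_sqrt_sq, ← chi_add]
  ring_nf

noncomputable def Fmat : Matrix (ZMod L) (ZMod L) ℂ :=
  Matrix.of fun a k => fourierVec L k a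

noncomputable def uMat (lamv : ZMod L → ℂ) : Matrix (ZMod L) (ZMod L) ℂ :=
  Fmat L * Matrix.diagonal lamv * (Fmat L)ᴴ

lemma Fmat_unitary_left : (Fmat L)ᴴ * Fmat L = 1 := by
  ext k m
  simp only [Matrix.mul_apply, Matrix.conjTranspose_apply, Fmat, Matrix.of_apply,
    Matrix.one_apply, star_def]
  exact fourierVec_orthonormal L k m

lemma Fmat_unitary_right : Fmat L * (Fmat L)ᴴ = 1 := by
  ext a b
  simp only [Matrix.mul_apply, Matrix.conjTranspose_apply, Fmat, Matrix.of_apply,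
    Matrix.one_apply, star_def]
  exact fourierVec_complete' L a b

lemma uMat_apply (lamv : ZMod L → ℂ) (a b : ZMod L) :
    uMat L lamv a b = ∑ k : ZMod L, lamv k * ((1 / L : ℂ) * χ L (k * a - k * b)) := by
  unfold uMat
  rw [Matrix.mul_apply]
  refine Finset.sum_congr rfl fun k _ => ?_
  rw [Matrix.mul_diagonal, Matrix.conjTranspose_apply]
  simp only [Fmat, Matrix.of_apply, star_def]
  linear_combination lamv k * vec_pair L k a b

lemma uMat_circulant (lamv : ZMod L → ℂ) :
    ∀ a b m : ZMod L, uMat L lamv (a + m) (b + m) = uMat L lamv a b := by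
  intro a b m
  rw [uMat_apply, uMat_apply]
  refine Finset.sum_congr rfl fun k _ => ?_
  have : k * (a + m) - k * (b + m) = k * a - k * b := by ring
  rw [this]

lemma uMat_symm (lamv : ZMod L → ℂ) (heven : ∀ k, lamv (-k) = lamv k) :
    (uMat L lamv)ᵀ = uMat L lamv := by
  ext a b
  rw [Matrix.transpose_apply, uMat_apply, uMat_apply]
  rw [← Equiv.sum_comp (Equiv.neg (ZMod L)) (fun k => lamv k * ((1 / L : ℂ) * χ L (k * b - k * a)))]
  refine Finset.sum_congr rfl fun k _ => ?_
  rw [Equiv.neg_apply, heven]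
  have : -k * b - -k * a = k * a - k * b := by ring
  rw [this]

lemma uMat_unitary (lamv : ZMod L → ℂ) (hnorm : ∀ k, lamv k * (starRingEnd ℂ) (lamv k) = 1) :
    uMat L lamv ∈ Matrix.unitaryGroup (ZMod L) ℂ := by
  rw [Matrix.mem_unitaryGroup_iff]
  have hstar : star (uMat L lamv) = Fmat L * Matrix.diagonal (star lamv) * (Fmat L)ᴴ := by
    unfold uMat
    rw [Matrix.star_eq_conjTranspose]
    rw [Matrix.conjTranspose_mul, Matrix.conjTranspose_mul, Matrix.conjTranspose_conjTranspose,
      Matrix.diagonal_conjTranspose, Matrix.mul_assoc]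
  rw [hstar]
  unfold uMat
  have key : Matrix.diagonal lamv * ((Fmat L)ᴴ * (Fmat L * Matrix.diagonal (star lamv)))
      = Matrix.diagonal lamv * Matrix.diagonal (star lamv) := by
    rw [← Matrix.mul_assoc ((Fmat L)ᴴ), Fmat_unitary_left, Matrix.one_mul]
  have hdiag : Matrix.diagonal lamv * Matrix.diagonal (star lamv) = 1 := by
    ext a b
    rw [Matrix.diagonal_mul_diagonal]
    by_cases h : a = b
    · subst h
      rw [Matrix.diagonal_apply_eq, Matrix.one_apply_eq]
      exact hnorm a
    · rw [Matrix.diagonal_apply_ne _ h, Matrix.one_apply_ne h]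
  calc Fmat L * Matrix.diagonal lamv * (Fmat L)ᴴ * (Fmat L * Matrix.diagonal (star lamv) * (Fmat L)ᴴ)
      = Fmat L * (Matrix.diagonal lamv * ((Fmat L)ᴴ * (Fmat L * Matrix.diagonal (star lamv)))) * (Fmat L)ᴴ := by
        simp only [Matrix.mul_assoc]
    _ = Fmat L * (Fmat L)ᴴ := by rw [key, hdiag, Matrix.mul_one]
    _ = 1 := Fmat_unitary_right L

lemma uMat_mulVec (lamv : ZMod L → ℂ) (m : ZMod L) :
    uMat L lamv *ᵥ fourierVec L m = lamv m • fourierVec L m := by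
  unfold uMat
  have h1 : (Fmat L)ᴴ *ᵥ fourierVec L m = Pi.single m 1 := by
    funext k
    have : ((Fmat L)ᴴ *ᵥ fourierVec L m) k
        = ∑ a : ZMod L, (starRingEnd ℂ) (fourierVec L k a) * fourierVec L m a := by
      simp [Matrix.mulVec, dotProduct, Fmat, Matrix.conjTranspose_apply, star_def]
    rw [this, fourierVec_orthonormal]
    by_cases h : k = m
    · subst h; simp
    · simp [h, Pi.single_apply]
  rw [← Matrix.mulVec_mulVec, ← Matrix.mulVec_mulVec, h1]
  have h2 : Matrix.diagonal lamv *ᵥ Pi.single m 1 = Pi.single m (lamv m) := by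
    funext k
    rw [Matrix.mulVec_diagonal]
    by_cases h : k = m
    · subst h; simp
    · simp [h, Pi.single_apply]
  rw [h2]
  funext a
  have : (Fmat L *ᵥ Pi.single m (lamv m)) a = lamv m * fourierVec L m a := by
    simp [Matrix.mulVec, dotProduct, Fmat, Pi.single_apply, Finset.sum_ite_eq', mul_comm]
  rw [this]
  simp [Pi.smul_apply, smul_eq_mul]

lemma fourierVec_zero_ne (k : ZMod L) : fourierVec L k 0 ≠ 0 := by
  rw [fourierVec_eq]
  have h0 : (k * 0 : ZMod L) = 0 := by ring
  rw [h0, chi_zero, mul_one]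
  have hpos : (0:ℝ) < Real.sqrt L :=
    Real.sqrt_pos.mpr (by exact_mod_cast Nat.pos_of_ne_zero (NeZero.ne L))
  simp only [ne_eq, Complex.ofReal_eq_zero]
  exact div_ne_zero one_ne_zero hpos.ne'

lemma lam_uMat (lamv : ZMod L → ℂ) (m : ZMod L) : lam L (uMat L lamv) m = lamv m := by
  have h1 := congrFun (mulVec_eigen L (uMat L lamv) (uMat_circulant L lamv) m) 0
  have h2 := congrFun (uMat_mulVec L lamv m) 0
  rw [h1] at h2
  simp only [Pi.smul_apply, smul_eq_mul] at h2
  exact mul_right_cancel₀ (fourierVec_zero_ne L m) h2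

end CUSymAux
namespace CUSymAux

variable (L : ℕ) [NeZero L]

def rcl (k : ZMod L) : ZMod L := if 2 * k.val < L then k else -k

lemma rcl_spec (k : ZMod L) : rcl L k = k ∨ rcl L k = -k := by
  unfold rcl; split
  · exact Or.inl rfl
  · exact Or.inr rfl

lemma rcl_neg (hL : Odd L) (k : ZMod L) : rcl L (-k) = rcl L k := by
  by_cases h : k = 0
  · subst h; rw [neg_zero]
  · have hval : (-k).val = L - k.val := by rw [ZMod.neg_val, if_neg h]
    have hk0 : k.val ≠ 0 := fun hc => h ((ZMod.val_eq_zero k).mp hc)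
    have hkL : k.val < L := ZMod.val_lt k
    have hne : 2 * k.val ≠ L := by
      intro hc
      have : Even (2 * k.val) := even_two_mul _
      rw [hc] at this
      exact (Nat.not_odd_iff_even.mpr this) hL
    unfold rcl
    rw [hval]
    by_cases hlt : 2 * k.val < L
    · rw [if_pos hlt, if_neg (by omega), neg_neg]
    · rw [if_neg hlt, if_pos (by omega)]

lemma rcl_classes (m m' : ZMod L) (h : rcl L m = rcl L m') : m' = m ∨ m' = -m := by
  rcases rcl_spec L m with h1 | h1 <;> rcases rcl_spec L m' with h2 | h2 <;>
    rw [h1, h2] at h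
  · exact Or.inl h.symm
  · exact Or.inr (by rw [h, neg_neg])
  · exact Or.inr h.symm
  · exact Or.inl (neg_inj.mp h).symm

lemma tupleEquiv_of_invariant (hL : Odd L) (t : ℕ) (i j : Fin t → ZMod L)
    (h : ∀ lamv : ZMod L → ℂ, (∀ k, lamv (-k) = lamv k) →
      (∀ k, lamv k * (starRingEnd ℂ) (lamv k) = 1) →
      ∏ a : Fin t, lamv (i a) = ∏ a : Fin t, lamv (j a)) :
    tupleEquiv L t i j := by
  classical
  set z : ℂ := Complex.exp (2 * Real.pi * Complex.I / (2 * t + 1)) with hzdef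
  have hz : IsPrimitiveRoot z (2 * t + 1) := by
    have := Complex.isPrimitiveRoot_exp (2 * t + 1) (by omega)
    convert this using 2
    push_cast
    ring
  have hznorm : z * (starRingEnd ℂ) z = 1 := by
    rw [hzdef, ← Complex.exp_conj, ← Complex.exp_add]
    rw [show ((2 * Real.pi * Complex.I / (2 * t + 1))
        + (starRingEnd ℂ) (2 * Real.pi * Complex.I / (2 * t + 1))) = 0 by
      simp only [map_div₀, _root_.map_mul, map_add, _root_.map_one, map_ofNat,
        Complex.conj_I, Complex.conj_ofReal, Complex.conj_natCast]
      ring]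
    exact Complex.exp_zero
  have hcounts : ∀ c : ZMod L,
      (Finset.univ.filter (fun a : Fin t => rcl L (i a) = c)).card
        = (Finset.univ.filter (fun a : Fin t => rcl L (j a) = c)).card := by
    intro c
    set lamv : ZMod L → ℂ := fun m => if rcl L m = c then z else 1 with hlamv
    have heven : ∀ k, lamv (-k) = lamv k := by
      intro k; simp only [hlamv, rcl_neg L hL]
    have hnorm : ∀ k, lamv k * (starRingEnd ℂ) (lamv k) = 1 := by
      intro k
      by_cases hk : rcl L k = c
      · simp only [hlamv, if_pos hk]; exact hznorm
      · simp [hlamv, if_neg hk]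
    have hprod : ∀ f : Fin t → ZMod L, ∏ a : Fin t, lamv (f a)
        = z ^ (Finset.univ.filter (fun a : Fin t => rcl L (f a) = c)).card := by
      intro f
      rw [← Finset.prod_const, Finset.prod_filter]
    have := h lamv heven hnorm
    rw [hprod i, hprod j] at this
    have hle : ∀ f : Fin t → ZMod L,
        (Finset.univ.filter (fun a : Fin t => rcl L (f a) = c)).card < 2 * t + 1 := by
      intro f
      have hcf := Finset.card_filter_le Finset.univ (fun a : Fin t => rcl L (f a) = c)
      simp only [Finset.card_univ, Fintype.card_fin] at hcf
      omega
    exact hz.pow_inj (hle i) (hle j) this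
  have fibers : ∀ c : ZMod L, Fintype.card {a : Fin t // rcl L (i a) = c}
      = Fintype.card {a : Fin t // rcl L (j a) = c} := by
    intro c
    rw [Fintype.card_subtype, Fintype.card_subtype, hcounts c]
  let e : ∀ c : ZMod L, {a : Fin t // (fun a => rcl L (i a)) a = c}
      ≃ {a : Fin t // (fun a => rcl L (j a)) a = c} :=
    fun c => Fintype.equivOfCardEq (fibers c)
  let σ : Equiv.Perm (Fin t) := Equiv.ofFiberEquiv e
  have hσ : ∀ a : Fin t, rcl L (j (σ a)) = rcl L (i a) :=
    fun a => Equiv.ofFiberEquiv_map e a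
  refine ⟨σ.symm, fun a => ?_⟩
  have hh := hσ (σ.symm a)
  rw [Equiv.apply_symm_apply] at hh
  exact rcl_classes L (i (σ.symm a)) (j a) hh.symm

end CUSymAux
namespace CUSymAux

variable (L : ℕ) [NeZero L] (t : ℕ)

lemma fourierTensor_orthonormal' (j j' : Fin t → ZMod L) :
    ∑ x : Fin t → ZMod L, fourierTensor L t j x * (starRingEnd ℂ) (fourierTensor L t j' x)
      = if j = j' then 1 else 0 := by
  have h := congrArg (starRingEnd ℂ) (fourierTensor_orthonormal L t j j')
  rw [map_sum] at h
  simp only [_root_.map_mul, Complex.conj_conj, apply_ite (starRingEnd ℂ),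
    RingHom.map_one, RingHom.map_zero] at h
  rw [← h]

lemma prod_lam_eq_of_tupleEquiv (u : Matrix (ZMod L) (ZMod L) ℂ)
    (hcirc : ∀ a b k : ZMod L, u (a + k) (b + k) = u a b) (hsym : uᵀ = u)
    (i j : Fin t → ZMod L) (hij : tupleEquiv L t i j) :
    ∏ a : Fin t, lam L u (j a) = ∏ a : Fin t, lam L u (i a) := by
  obtain ⟨π, hπ⟩ := hij
  calc ∏ a : Fin t, lam L u (j a) = ∏ a : Fin t, lam L u (i (π a)) := by
        refine Finset.prod_congr rfl fun a _ => ?_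
        rcases hπ a with h | h
        · rw [h]
        · rw [h, lam_neg L u hcirc hsym]
    _ = ∏ a : Fin t, lam L u (i a) := Equiv.prod_comp π (fun a => lam L u (i a))

lemma rankOne_comm (u : Matrix (ZMod L) (ZMod L) ℂ)
    (hcirc : ∀ a b k : ZMod L, u (a + k) (b + k) = u a b) (hsym : uᵀ = u)
    (i j : Fin t → ZMod L) (hij : tupleEquiv L t i j) :
    fourierRankOne L t i j * Mpow L t u = Mpow L t u * fourierRankOne L t i j := by
  have hprod := prod_lam_eq_of_tupleEquiv L t u hcirc hsym i j hij
  have hneg : ∀ w : Fin t → ZMod L, fourierTensor L t (fun a => -(j a)) w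
      = (starRingEnd ℂ) (fourierTensor L t j w) := by
    intro w
    rw [conj_fourierTensor]
    rfl
  have hlamneg : (∏ a : Fin t, lam L u (-(j a))) = ∏ a : Fin t, lam L u (j a) :=
    Finset.prod_congr rfl fun a _ => lam_neg L u hcirc hsym (j a)
  ext x y
  have hmv := congrFun (Mpow_mulVec L t u hcirc i) x
  have hvm := congrFun (Mpow_vecMul L t u hcirc hsym (fun a => -(j a))) y
  simp only [Matrix.mulVec, Matrix.vecMul, dotProduct, Pi.smul_apply, smul_eq_mul, hneg,
    hlamneg] at hmv hvm
  rw [Matrix.mul_apply, Matrix.mul_apply]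
  have hL1 : ∑ z : Fin t → ZMod L, fourierRankOne L t i j x z * Mpow L t u z y
      = fourierTensor L t i x * ∑ z : Fin t → ZMod L,
          (starRingEnd ℂ) (fourierTensor L t j z) * Mpow L t u z y := by
    rw [Finset.mul_sum]
    refine Finset.sum_congr rfl fun z _ => ?_
    simp only [fourierRankOne, Matrix.of_apply]
    ring
  have hL2 : ∑ z : Fin t → ZMod L, Mpow L t u x z * fourierRankOne L t i j z y
      = (∑ z : Fin t → ZMod L, Mpow L t u x z * fourierTensor L t i z)
          * (starRingEnd ℂ) (fourierTensor L t j y) := by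
    rw [Finset.sum_mul]
    refine Finset.sum_congr rfl fun z _ => ?_
    simp only [fourierRankOne, Matrix.of_apply]
    ring
  rw [hL1, hL2, hvm, hmv, hprod]
  ring

lemma coeff_eq_zero (hL : Odd L) (T : Matrix (Fin t → ZMod L) (Fin t → ZMod L) ℂ)
    (hT : ∀ u : Matrix (ZMod L) (ZMod L) ℂ,
        u ∈ Matrix.unitaryGroup (ZMod L) ℂ →
        (∀ a b k : ZMod L, u (a + k) (b + k) = u a b) → uᵀ = u →
        T * Mpow L t u = Mpow L t u * T)
    (i j : Fin t → ZMod L) (hij : ¬ tupleEquiv L t i j) : coeff L t T i j = 0 := by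
  by_contra hc
  apply hij
  apply tupleEquiv_of_invariant L hL t i j
  intro lamv heven hnorm
  have h1 := hT (uMat L lamv) (uMat_unitary L lamv hnorm) (uMat_circulant L lamv)
    (uMat_symm L lamv heven)
  have h2 := congrArg (fun M => coeff L t M i j) h1
  rw [coeff_mul_right L t T _ (uMat_circulant L lamv) i j,
      coeff_mul_left L t T _ (uMat_circulant L lamv) (uMat_symm L lamv heven) i j] at h2
  have h3 := mul_right_cancel₀ hc h2
  simp only [lam_uMat] at h3
  exact h3.symm

lemma rankOne_HS (i j i' j' : Fin t → ZMod L) :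
    Matrix.trace (star (fourierRankOne L t i j) * fourierRankOne L t i' j')
      = if i = i' ∧ j = j' then 1 else 0 := by
  classical
  have key : Matrix.trace (star (fourierRankOne L t i j) * fourierRankOne L t i' j')
      = (∑ y : Fin t → ZMod L, (starRingEnd ℂ) (fourierTensor L t i y) * fourierTensor L t i' y)
        * (∑ x : Fin t → ZMod L, fourierTensor L t j x * (starRingEnd ℂ) (fourierTensor L t j' x)) := by
    rw [Matrix.trace, Finset.sum_mul_sum]
    rw [Finset.sum_comm]
    refine Finset.sum_congr rfl fun x _ => ?_
    rw [Matrix.diag_apply, Matrix.mul_apply]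
    refine Finset.sum_congr rfl fun y _ => ?_
    simp only [Matrix.star_apply, fourierRankOne, Matrix.of_apply, star_def, _root_.map_mul,
      Complex.conj_conj]
    ring
  rw [key, fourierTensor_orthonormal, fourierTensor_orthonormal']
  by_cases h1 : i = i' <;> by_cases h2 : j = j' <;> simp [h1, h2]

end CUSymAux
/-- For `L` odd, the commutant of `{u^{⊗t} : u ∈ CU_Sym(L)}` equals the span of the rank-one
Fourier operators over pairs `i ∼ j`, and these operators form an orthonormal family for the
Hilbert–Schmidt inner product. -/
theorem commutant_of_CUSym_tensor_power (L : ℕ) [NeZero L] (hL : Odd L) (t : ℕ) :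
    ({T : Matrix (Fin t → ZMod L) (Fin t → ZMod L) ℂ |
        ∀ u : Matrix (ZMod L) (ZMod L) ℂ,
          u ∈ Matrix.unitaryGroup (ZMod L) ℂ →
          (∀ a b k : ZMod L, u (a + k) (b + k) = u a b) → uᵀ = u →
          T * (Matrix.of fun (x y : Fin t → ZMod L) => ∏ a : Fin t, u (x a) (y a))
            = (Matrix.of fun (x y : Fin t → ZMod L) => ∏ a : Fin t, u (x a) (y a)) * T}
      = ↑(Submodule.span ℂ
          {C : Matrix (Fin t → ZMod L) (Fin t → ZMod L) ℂ |
            ∃ i j : Fin t → ZMod L, tupleEquiv L t i j ∧ C = fourierRankOne L t i j})) ∧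
    (∀ i j i' j' : Fin t → ZMod L, tupleEquiv L t i j → tupleEquiv L t i' j' →
      Matrix.trace (star (fourierRankOne L t i j) * fourierRankOne L t i' j')
        = if i = i' ∧ j = j' then 1 else 0) := by
  classical
  constructor
  · ext T
    simp only [Set.mem_setOf_eq, SetLike.mem_coe]
    constructor
    · intro hT
      have hT' : ∀ u : Matrix (ZMod L) (ZMod L) ℂ,
          u ∈ Matrix.unitaryGroup (ZMod L) ℂ →
          (∀ a b k : ZMod L, u (a + k) (b + k) = u a b) → uᵀ = u →
          T * CUSymAux.Mpow L t u = CUSymAux.Mpow L t u * T := hT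
      rw [CUSymAux.expansion L t T]
      apply Submodule.sum_mem
      intro p _
      by_cases hp : tupleEquiv L t p.1 p.2
      · exact Submodule.smul_mem _ _ (Submodule.subset_span ⟨p.1, p.2, hp, rfl⟩)
      · rw [CUSymAux.coeff_eq_zero L t hL T hT' p.1 p.2 hp, zero_smul]
        exact Submodule.zero_mem _
    · intro hT u hu hcirc hsym
      have goal : T * CUSymAux.Mpow L t u = CUSymAux.Mpow L t u * T := by
        induction hT using Submodule.span_induction with
        | mem x hx =>
          obtain ⟨i, j, hij, rfl⟩ := hx
          exact CUSymAux.rankOne_comm L t u hcirc hsym i j hij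
        | zero => rw [zero_mul, mul_zero]
        | add x y _ _ hx hy => rw [add_mul, mul_add, hx, hy]
        | smul c x _ hx => rw [smul_mul_assoc, mul_smul_comm, hx]
      exact goal
  · intro i j i' j' _ _
    exact CUSymAux.rankOne_HS L t i j i' j'
end

section
/- For L odd, the dimension of the commutant of {u^{⊗2} : u ∈ CU_Sym(L)} equals 8L² − 16L + 9. -/
open Matrix Complex Finset
open scoped Kronecker

section CharacterLayer
variable {L : ℕ} [NeZero L]

noncomputable abbrev ee : ZMod L → ℂ := ZMod.stdAddChar

lemma ee_add (a b : ZMod L) : ee (a + b) = ee a * ee b := AddChar.map_add_eq_mul _ a b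

lemma ee_mul_ee_neg (a : ZMod L) : ee a * ee (-a) = 1 := by
  rw [← ee_add]; simp

lemma conj_ee (a : ZMod L) : (starRingEnd ℂ) (ee a) = ee (-a) := by
  have habs : ‖ee a‖ = 1 := by
    rw [show ee a = ↑(ZMod.toCircle a) from ZMod.stdAddChar_apply a]
    exact Circle.norm_coe _
  have h1 : (starRingEnd ℂ) (ee a) * ee a = 1 := by
    rw [mul_comm, Complex.mul_conj, Complex.normSq_eq_norm_sq, habs]; norm_num
  calc (starRingEnd ℂ) (ee a) = (starRingEnd ℂ) (ee a) * (ee a * ee (-a)) := by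
        rw [ee_mul_ee_neg, mul_one]
    _ = ee (-a) := by rw [← mul_assoc, h1, one_mul]

lemma ee_orth (t : ZMod L) : ∑ i : ZMod L, ee (t * i) = if t = 0 then (L : ℂ) else 0 := by
  split_ifs with h
  · simp only [h, zero_mul, AddChar.map_zero_eq_one, sum_const, card_univ, ZMod.card,
      nsmul_eq_mul, mul_one]
  · exact AddChar.sum_eq_zero_of_ne_one (ZMod.isPrimitive_stdAddChar L h)

end CharacterLayer

section FourierLayer
variable {L : ℕ} [NeZero L]

noncomputable def Fm (L : ℕ) [NeZero L] : Matrix (ZMod L) (ZMod L) ℂ :=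
  of fun a b => ee (a * b)
noncomputable def Gm (L : ℕ) [NeZero L] : Matrix (ZMod L) (ZMod L) ℂ :=
  (L : ℂ)⁻¹ • of fun a b => ee (-(a * b))

lemma Fm_mul_Gm : Fm L * Gm L = 1 := by
  ext a b
  simp only [Fm, Gm, mul_apply, of_apply, Matrix.smul_apply, smul_eq_mul]
  have h : ∀ c : ZMod L, ee (a * c) * ((L:ℂ)⁻¹ * ee (-(c * b)))
      = (L:ℂ)⁻¹ * ee ((a - b) * c) := by
    intro c
    rw [show (a - b) * c = a * c + -(c * b) by ring, ee_add]; ring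
  simp_rw [h, ← mul_sum, ee_orth, sub_eq_zero]
  rcases eq_or_ne a b with h | h
  · simp [h, one_apply, inv_mul_cancel₀ (Nat.cast_ne_zero.2 (NeZero.ne L) : (L:ℂ) ≠ 0)]
  · simp [h, one_apply, Ne.symm h]

lemma Gm_mul_Fm : Gm L * Fm L = 1 := by
  ext a b
  simp only [Fm, Gm, mul_apply, of_apply, Matrix.smul_apply, smul_eq_mul]
  have h : ∀ c : ZMod L, (L:ℂ)⁻¹ * ee (-(a * c)) * ee (c * b)
      = (L:ℂ)⁻¹ * ee ((b - a) * c) := by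
    intro c
    rw [show (b - a) * c = -(a * c) + c * b by ring, ee_add]; ring
  simp_rw [h, ← mul_sum, ee_orth, sub_eq_zero]
  rcases eq_or_ne a b with h | h
  · simp [h, one_apply, inv_mul_cancel₀ (Nat.cast_ne_zero.2 (NeZero.ne L) : (L:ℂ) ≠ 0)]
  · simp [h, one_apply, fun hh : b = a => Ne.symm h hh]

noncomputable def lam (u : Matrix (ZMod L) (ZMod L) ℂ) : ZMod L → ℂ :=
  fun j => ∑ t : ZMod L, u t 0 * ee (j * t)

lemma Fm_mul_circulant (u : Matrix (ZMod L) (ZMod L) ℂ)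
    (hcirc : ∀ a b k : ZMod L, u (a + k) (b + k) = u a b) :
    Fm L * u = diagonal (lam u) * Fm L := by
  ext j b
  rw [diagonal_mul]
  simp only [Fm, mul_apply, of_apply, lam]
  have hub : ∀ c, u c b = u (c - b) 0 := by
    intro c
    have h := hcirc (c - b) 0 b
    rwa [sub_add_cancel, zero_add] at h
  simp_rw [hub]
  rw [Finset.sum_mul]
  refine Fintype.sum_equiv (Equiv.subRight b) _ _ (fun c => ?_)
  simp only [Equiv.subRight_apply]
  have : j * c = j * (c - b) + j * b := by ring
  rw [this, ee_add]; ring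

lemma lam_even (u : Matrix (ZMod L) (ZMod L) ℂ)
    (hcirc : ∀ a b k : ZMod L, u (a + k) (b + k) = u a b) (hsym : uᵀ = u) (j : ZMod L) :
    lam u (-j) = lam u j := by
  unfold lam
  refine Fintype.sum_equiv (Equiv.neg _) _ _ (fun t => ?_)
  simp only [Equiv.neg_apply]
  have h1 : u (-t) 0 = u t 0 := by
    have h2 := hcirc (-t) 0 t
    rw [neg_add_cancel, zero_add] at h2
    have h3 : u 0 t = uᵀ t 0 := rfl
    rw [hsym] at h3
    rw [← h2, h3]
  rw [h1]
  congr 1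
  congr 1
  ring

noncomputable def uOf (lm : ZMod L → ℂ) : Matrix (ZMod L) (ZMod L) ℂ :=
  Gm L * (diagonal lm * Fm L)

lemma uOf_apply (lm : ZMod L → ℂ) (a b : ZMod L) :
    uOf lm a b = (L : ℂ)⁻¹ * ∑ j : ZMod L, lm j * ee (j * (b - a)) := by
  simp only [uOf, Gm, mul_apply, Matrix.smul_apply, of_apply, smul_eq_mul, Fm, diagonal_apply,
    ite_mul, zero_mul, Finset.sum_ite_eq, mem_univ, if_true]
  rw [mul_sum]
  refine Finset.sum_congr rfl fun j _ => ?_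
  rw [show j * (b - a) = j * b + -(a * j) by ring, ee_add]
  ring

lemma uOf_circ (lm : ZMod L → ℂ) (a b k : ZMod L) : uOf lm (a + k) (b + k) = uOf lm a b := by
  rw [uOf_apply, uOf_apply, add_sub_add_right_eq_sub]

lemma uOf_symm (lm : ZMod L → ℂ) (hev : ∀ j, lm (-j) = lm j) : (uOf lm)ᵀ = uOf lm := by
  ext a b
  rw [transpose_apply, uOf_apply, uOf_apply]
  congr 1
  refine Fintype.sum_equiv (Equiv.neg _) _ _ (fun j => ?_)
  simp only [Equiv.neg_apply]
  rw [hev]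
  congr 1
  congr 1
  ring

lemma Fm_mul_uOf (lm : ZMod L → ℂ) : Fm L * uOf lm = diagonal lm * Fm L := by
  rw [uOf, ← mul_assoc, Fm_mul_Gm, one_mul]

lemma uOf_mul (lm lm' : ZMod L → ℂ) :
    uOf lm * uOf lm' = uOf (fun j => lm j * lm' j) := by
  unfold uOf
  rw [show Gm L * (diagonal lm * Fm L) * (Gm L * (diagonal lm' * Fm L))
      = Gm L * (diagonal lm * ((Fm L * Gm L) * (diagonal lm' * Fm L))) by
    simp only [mul_assoc], Fm_mul_Gm, one_mul,
    show diagonal lm * (diagonal lm' * Fm L) = diagonal lm * diagonal lm' * Fm L from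
      (mul_assoc _ _ _).symm, diagonal_mul_diagonal]

lemma uOf_one : uOf (fun _ : ZMod L => (1 : ℂ)) = 1 := by
  unfold uOf
  rw [diagonal_one, one_mul, Gm_mul_Fm]

lemma star_uOf (lm : ZMod L → ℂ) : star (uOf lm) = uOf (fun j => (starRingEnd ℂ) (lm j)) := by
  ext a b
  rw [Matrix.star_apply, uOf_apply, uOf_apply, star_def, _root_.map_mul, map_inv₀, map_natCast,
    map_sum]
  congr 1
  refine Finset.sum_congr rfl fun j _ => ?_
  rw [_root_.map_mul, conj_ee]
  congr 1
  congr 1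
  ring

lemma uOf_unitary (lm : ZMod L → ℂ) (huni : ∀ j, lm j * (starRingEnd ℂ) (lm j) = 1) :
    uOf lm ∈ Matrix.unitaryGroup (ZMod L) ℂ := by
  rw [Matrix.mem_unitaryGroup_iff, star_uOf, uOf_mul]
  simp_rw [huni]
  exact uOf_one

lemma circulant_eq_uOf (u : Matrix (ZMod L) (ZMod L) ℂ) (lm : ZMod L → ℂ)
    (h : Fm L * u = diagonal lm * Fm L) : u = uOf lm := by
  have h2 := congrArg (fun M => Gm L * M) h
  simpa only [← mul_assoc, Gm_mul_Fm, one_mul, uOf] using h2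

end FourierLayer

section RelationLayer

def relc {L : ℕ} (a b : ZMod L) : Prop := b = a ∨ b = -a
instance {L : ℕ} (a b : ZMod L) : Decidable (relc a b) := by unfold relc; infer_instance

def Rrel {L : ℕ} (p q : ZMod L × ZMod L) : Prop :=
  (relc p.1 q.1 ∧ relc p.2 q.2) ∨ (relc p.1 q.2 ∧ relc p.2 q.1)
instance {L : ℕ} (p q : ZMod L × ZMod L) : Decidable (Rrel p q) := by
  unfold Rrel; infer_instance

lemma relc_refl {L : ℕ} (a : ZMod L) : relc a a := Or.inl rfl

lemma relc_symm {L : ℕ} {a b : ZMod L} (h : relc a b) : relc b a := by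
  rcases h with h | h
  · exact Or.inl h.symm
  · exact Or.inr (by rw [h, neg_neg])

lemma relc_trans {L : ℕ} {x y z : ZMod L} (h1 : relc x y) (h2 : relc x z) : relc y z := by
  rcases h1 with hy | hy <;> rcases h2 with hz | hz <;> rw [hy, hz] <;>
    first
      | exact Or.inl rfl
      | exact Or.inr (by rw [neg_neg])
      | exact Or.inr rfl

variable {L : ℕ} [NeZero L]

lemma eval_even (lm : ZMod L → ℂ) (hev : ∀ j, lm (-j) = lm j)
    {a b : ZMod L} (h : relc a b) : lm b = lm a := by
  rcases h with h | h
  · rw [h]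
  · rw [h, hev]

lemma dsep (lm : ZMod L → ℂ) (hev : ∀ j, lm (-j) = lm j)
    {p q : ZMod L × ZMod L} (h : Rrel p q) :
    lm q.1 * lm q.2 = lm p.1 * lm p.2 := by
  rcases h with ⟨h1, h2⟩ | ⟨h1, h2⟩
  · rw [eval_even lm hev h1, eval_even lm hev h2]
  · rw [eval_even lm hev h1, eval_even lm hev h2, mul_comm]

noncomputable def lmOf {L : ℕ} (a : ZMod L) : ZMod L → ℂ :=
  fun x => if relc a x then I else 1

lemma lmOf_even {L : ℕ} (a x : ZMod L) : lmOf a (-x) = lmOf a x := by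
  unfold lmOf
  have h : relc a (-x) ↔ relc a x := by
    unfold relc
    constructor
    · rintro (h | h)
      · exact Or.inr (by rw [← h, neg_neg])
      · exact Or.inl (neg_injective h)
    · rintro (h | h)
      · exact Or.inr (by rw [h])
      · exact Or.inl (by rw [h, neg_neg])
  exact if_congr h rfl rfl

lemma lmOf_unimod {L : ℕ} (a x : ZMod L) : lmOf a x * (starRingEnd ℂ) (lmOf a x) = 1 := by
  unfold lmOf
  split_ifs
  · simp [Complex.conj_I]
  · simp

lemma lmOf_of_rel {L : ℕ} {a x : ZMod L} (h : relc a x) : lmOf a x = I := if_pos h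
lemma lmOf_of_not_rel {L : ℕ} {a x : ZMod L} (h : ¬ relc a x) : lmOf a x = 1 := if_neg h

lemma helper1 {L : ℕ} (a : ZMod L) (j k j' k' : ZMod L)
    (ha : relc a j ∨ relc a k) (h1 : ¬ relc a j') (h2 : ¬ relc a k') :
    lmOf a j * lmOf a k ≠ lmOf a j' * lmOf a k' := by
  rw [lmOf_of_not_rel h1, lmOf_of_not_rel h2, one_mul]
  rcases ha with ha | ha
  · rw [lmOf_of_rel ha]
    by_cases hk : relc a k
    · rw [lmOf_of_rel hk, Complex.I_mul_I]
      norm_num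
    · rw [lmOf_of_not_rel hk, mul_one]
      exact fun hI => by simpa using congrArg Complex.im hI
  · rw [lmOf_of_rel ha]
    by_cases hj : relc a j
    · rw [lmOf_of_rel hj, Complex.I_mul_I]
      norm_num
    · rw [lmOf_of_not_rel hj, one_mul]
      exact fun hI => by simpa using congrArg Complex.im hI

lemma key_sep {L : ℕ} {p q : ZMod L × ZMod L} (h : ¬ Rrel p q) :
    ∃ lm : ZMod L → ℂ, (∀ j, lm (-j) = lm j) ∧ (∀ j, lm j * (starRingEnd ℂ) (lm j) = 1) ∧
      lm p.1 * lm p.2 ≠ lm q.1 * lm q.2 := by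
  obtain ⟨j, k⟩ := p
  obtain ⟨j', k'⟩ := q
  unfold Rrel at h
  push_neg at h
  simp only at h ⊢
  by_cases hjj : relc j j' <;> by_cases hjk : relc j k' <;>
    by_cases hkj : relc k j' <;> by_cases hkk : relc k k'
  all_goals first
    | exact absurd hkk (h.1 hjj)
    | exact absurd hkj (h.2 hjk)
    | (first
        | exact ⟨lmOf j, lmOf_even j, lmOf_unimod j,
            helper1 j j k j' k' (Or.inl (relc_refl j)) hjj hjk⟩
        | exact ⟨lmOf k, lmOf_even k, lmOf_unimod k,
            helper1 k j k j' k' (Or.inr (relc_refl k)) hkj hkk⟩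
        | exact ⟨lmOf j', lmOf_even j', lmOf_unimod j',
            (helper1 j' j' k' j k (Or.inl (relc_refl j'))
              (fun hh => hjj (relc_symm hh)) (fun hh => hkj (relc_symm hh))).symm⟩
        | exact ⟨lmOf k', lmOf_even k', lmOf_unimod k',
            (helper1 k' j' k' j k (Or.inr (relc_refl k'))
              (fun hh => hjk (relc_symm hh)) (fun hh => hkk (relc_symm hh))).symm⟩)

end RelationLayer

section CommutantLayer
variable {L : ℕ} [NeZero L]

variable (L) in
noncomputable def commMod : Submodule ℂ (Matrix (ZMod L × ZMod L) (ZMod L × ZMod L) ℂ) where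
  carrier := {T | ∀ u : Matrix (ZMod L) (ZMod L) ℂ,
            u ∈ Matrix.unitaryGroup (ZMod L) ℂ →
            (∀ a b k : ZMod L, u (a + k) (b + k) = u a b) → uᵀ = u →
            T * (Matrix.of fun x y : ZMod L × ZMod L => u x.1 y.1 * u x.2 y.2)
              = (Matrix.of fun x y : ZMod L × ZMod L => u x.1 y.1 * u x.2 y.2) * T}
  add_mem' := by
    intro T S hT hS u h1 h2 h3
    rw [add_mul, mul_add, hT u h1 h2 h3, hS u h1 h2 h3]
  zero_mem' := by
    intro u h1 h2 h3
    rw [zero_mul, mul_zero]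
  smul_mem' := by
    intro c T hT u h1 h2 h3
    rw [smul_mul_assoc, mul_smul_comm, hT u h1 h2 h3]

variable (L) in
noncomputable def Vmod : Submodule ℂ (Matrix (ZMod L × ZMod L) (ZMod L × ZMod L) ℂ) where
  carrier := {S | ∀ p q, ¬ Rrel p q → S p q = 0}
  add_mem' := by
    intro T S hT hS p q h
    simp [hT p q h, hS p q h]
  zero_mem' := by intro p q h; rfl
  smul_mem' := by
    intro c T hT p q h
    simp [hT p q h]

variable (L) in
noncomputable def Wk : Matrix (ZMod L × ZMod L) (ZMod L × ZMod L) ℂ := Fm L ⊗ₖ Fm L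
variable (L) in
noncomputable def Wk' : Matrix (ZMod L × ZMod L) (ZMod L × ZMod L) ℂ := Gm L ⊗ₖ Gm L

lemma Wk_mul_Wk' : Wk L * Wk' L = 1 := by
  rw [Wk, Wk', ← mul_kronecker_mul, Fm_mul_Gm, one_kronecker_one]

lemma Wk'_mul_Wk : Wk' L * Wk L = 1 := by
  rw [Wk, Wk', ← mul_kronecker_mul, Gm_mul_Fm, one_kronecker_one]

omit [NeZero L] in
lemma of_eq_kron (u : Matrix (ZMod L) (ZMod L) ℂ) :
    (Matrix.of fun x y : ZMod L × ZMod L => u x.1 y.1 * u x.2 y.2) = u ⊗ₖ u := by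
  ext ⟨a, b⟩ ⟨c, d⟩
  rfl

lemma kron_uOf (lm : ZMod L → ℂ) :
    uOf lm ⊗ₖ uOf lm = Wk' L * (diagonal (fun p : ZMod L × ZMod L => lm p.1 * lm p.2) * Wk L) := by
  have h1 : Wk L * (uOf lm ⊗ₖ uOf lm)
      = diagonal (fun p : ZMod L × ZMod L => lm p.1 * lm p.2) * Wk L := by
    rw [Wk, ← mul_kronecker_mul, Fm_mul_uOf, ← diagonal_kronecker_diagonal, mul_kronecker_mul]
  calc uOf lm ⊗ₖ uOf lm = (Wk' L * Wk L) * (uOf lm ⊗ₖ uOf lm) := by rw [Wk'_mul_Wk, one_mul]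
    _ = Wk' L * (diagonal (fun p : ZMod L × ZMod L => lm p.1 * lm p.2) * Wk L) := by
        rw [mul_assoc, h1]

lemma supported_comm_diag (S : Matrix (ZMod L × ZMod L) (ZMod L × ZMod L) ℂ)
    (hS : ∀ p q, ¬ Rrel p q → S p q = 0) (lm : ZMod L → ℂ) (hev : ∀ j, lm (-j) = lm j) :
    S * diagonal (fun p : ZMod L × ZMod L => lm p.1 * lm p.2)
      = diagonal (fun p : ZMod L × ZMod L => lm p.1 * lm p.2) * S := by
  ext p q
  rw [mul_diagonal, diagonal_mul]
  by_cases h : Rrel p q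
  · rw [dsep lm hev h]; ring
  · rw [hS p q h]; ring

lemma mem_commMod_of_supported (S : Matrix (ZMod L × ZMod L) (ZMod L × ZMod L) ℂ)
    (hS : S ∈ Vmod L) : Wk' L * S * Wk L ∈ commMod L := by
  intro u h1 h2 h3
  have hev := lam_even u h2 h3
  have hu : u = uOf (lam u) := circulant_eq_uOf u (lam u) (Fm_mul_circulant u h2)
  rw [of_eq_kron, hu, kron_uOf]
  have hcd := supported_comm_diag S hS (lam u) hev
  set D := diagonal (fun p : ZMod L × ZMod L => lam u p.1 * lam u p.2) with hD
  calc Wk' L * S * Wk L * (Wk' L * (D * Wk L))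
      = Wk' L * (S * ((Wk L * Wk' L) * (D * Wk L))) := by simp only [mul_assoc]
    _ = Wk' L * (S * D) * Wk L := by rw [Wk_mul_Wk', one_mul]; simp only [mul_assoc]
    _ = Wk' L * (D * S) * Wk L := by rw [hcd]
    _ = Wk' L * (D * ((Wk L * Wk' L) * (S * Wk L))) := by
        rw [Wk_mul_Wk', one_mul]; simp only [mul_assoc]
    _ = Wk' L * (D * Wk L) * (Wk' L * S * Wk L) := by simp only [mul_assoc]

lemma supported_of_mem_commMod (T : Matrix (ZMod L × ZMod L) (ZMod L × ZMod L) ℂ)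
    (hT : T ∈ commMod L) : Wk L * T * Wk' L ∈ Vmod L := by
  intro p q h
  obtain ⟨lm, hev, huni, hne⟩ := key_sep h
  have hu := hT (uOf lm) (uOf_unitary lm huni) (uOf_circ lm) (uOf_symm lm hev)
  rw [of_eq_kron, kron_uOf] at hu
  set D := diagonal (fun p : ZMod L × ZMod L => lm p.1 * lm p.2) with hD
  set S := Wk L * T * Wk' L with hSdef
  have hscomm : S * D = D * S := by
    calc S * D = Wk L * T * Wk' L * (D * (Wk L * Wk' L)) := by
          rw [Wk_mul_Wk', mul_one]
      _ = Wk L * (T * (Wk' L * (D * Wk L))) * Wk' L := by simp only [mul_assoc]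
      _ = Wk L * (Wk' L * (D * Wk L) * T) * Wk' L := by rw [hu]
      _ = (Wk L * Wk' L) * (D * (Wk L * T * Wk' L)) := by simp only [mul_assoc]
      _ = D * S := by rw [Wk_mul_Wk', one_mul]
  have hentry := congrFun (congrFun hscomm p) q
  rw [mul_diagonal, diagonal_mul] at hentry
  by_contra hne0
  have hcc : S p q * (lm q.1 * lm q.2) = S p q * (lm p.1 * lm p.2) := by
    rw [hentry]; ring
  exact hne (mul_left_cancel₀ hne0 hcc).symm

variable (L) in
noncomputable def Phi : Matrix (ZMod L × ZMod L) (ZMod L × ZMod L) ℂ ≃ₗ[ℂ]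
    Matrix (ZMod L × ZMod L) (ZMod L × ZMod L) ℂ where
  toFun T := Wk L * T * Wk' L
  map_add' T S := by noncomm_ring
  map_smul' c T := by simp [mul_smul_comm, smul_mul_assoc]
  invFun S := Wk' L * S * Wk L
  left_inv T := by
    calc Wk' L * (Wk L * T * Wk' L) * Wk L
        = (Wk' L * Wk L) * T * (Wk' L * Wk L) := by simp only [mul_assoc]
      _ = T := by rw [Wk'_mul_Wk]; simp
  right_inv S := by
    calc Wk L * (Wk' L * S * Wk L) * Wk' L
        = (Wk L * Wk' L) * S * (Wk L * Wk' L) := by simp only [mul_assoc]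
      _ = S := by rw [Wk_mul_Wk']; simp

lemma map_commMod : (commMod L).map (Phi L).toLinearMap = Vmod L := by
  ext S
  constructor
  · rintro ⟨T, hT, rfl⟩
    exact supported_of_mem_commMod T hT
  · intro hS
    refine ⟨Wk' L * S * Wk L, mem_commMod_of_supported S hS, ?_⟩
    show Wk L * (Wk' L * S * Wk L) * Wk' L = S
    calc Wk L * (Wk' L * S * Wk L) * Wk' L
        = (Wk L * Wk' L) * S * (Wk L * Wk' L) := by simp only [mul_assoc]
      _ = S := by rw [Wk_mul_Wk']; simp

variable (L) in
noncomputable def VmodEquiv :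
    (Vmod L) ≃ₗ[ℂ] ({x : (ZMod L × ZMod L) × (ZMod L × ZMod L) // Rrel x.1 x.2} → ℂ) where
  toFun S r := S.1 r.1.1 r.1.2
  map_add' S T := rfl
  map_smul' c S := rfl
  invFun f := ⟨Matrix.of fun p q => if h : Rrel p q then f ⟨(p, q), h⟩ else 0, by
    intro p q h
    simp only [Matrix.of_apply]
    rw [dif_neg h]⟩
  left_inv S := by
    apply Subtype.ext
    ext p q
    simp only [Matrix.of_apply]
    by_cases h : Rrel p q
    · rw [dif_pos h]
    · rw [dif_neg h, S.2 p q h]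
  right_inv f := by
    funext r
    simp only [Matrix.of_apply]
    rw [dif_pos r.2]

lemma finrank_commMod :
    Module.finrank ℂ (commMod L)
      = Fintype.card {x : (ZMod L × ZMod L) × (ZMod L × ZMod L) // Rrel x.1 x.2} := by
  rw [show Module.finrank ℂ (commMod L) = Module.finrank ℂ ((commMod L).map (Phi L).toLinearMap) from
    (LinearEquiv.finrank_map_eq (Phi L) (commMod L)).symm, map_commMod]
  rw [LinearEquiv.finrank_eq (VmodEquiv L)]
  rw [Module.finrank_pi ℂ]

end CommutantLayer

section CountingLayer
variable {L : ℕ} [NeZero L]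

omit [NeZero L] in
lemma neg_eq_self_iff (hL : Odd L) (a : ZMod L) : -a = a ↔ a = 0 := by
  constructor
  · intro h
    have h2 : (2 : ZMod L) * a = 0 := by
      have h3 : a + a = 0 := by
        rw [show a + a = -a + a by rw [h], neg_add_cancel]
      rw [two_mul, h3]
    have hu : IsUnit (2 : ZMod L) := by
      have := (ZMod.isUnit_iff_coprime 2 L).mpr (Nat.coprime_two_left.mpr hL)
      simpa using this
    rcases hu with ⟨v, hv⟩
    calc a = ((v⁻¹ : (ZMod L)ˣ) : ZMod L) * (2 * a) := by
          rw [← mul_assoc, ← hv, Units.inv_mul, one_mul]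
      _ = 0 := by rw [h2, mul_zero]
  · intro h; rw [h, neg_zero]

lemma cnt_lemma (hL : Odd L) (a : ZMod L) :
    (∑ b : ZMod L, (if relc a b then 1 else 0) : ℕ) = if a = 0 then 1 else 2 := by
  rw [Finset.sum_boole]
  have hfil : (univ.filter fun b : ZMod L => relc a b) = {a, -a} := by
    ext b
    rw [Finset.mem_filter]
    simp [relc, Finset.mem_insert, Finset.mem_singleton]
  rw [hfil]
  by_cases h : a = 0
  · subst h
    simp
  · rw [if_neg h, Finset.card_insert_of_notMem (by
      simp only [Finset.mem_singleton]
      intro hc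
      exact h (by rw [← neg_eq_self_iff hL, ← hc]))]
    simp

lemma sum_cnt :
    (∑ a : ZMod L, (if a = 0 then 1 else 2) : ℕ) = L + (L - 1) := by
  have h : ∀ a : ZMod L, (if a = 0 then 1 else 2 : ℕ) = 1 + (if ¬ a = 0 then 1 else 0) := by
    intro a; by_cases h : a = 0 <;> simp [h]
  simp_rw [h]
  rw [Finset.sum_add_distrib, Finset.sum_const, Finset.sum_boole]
  have h2 : (univ.filter fun a : ZMod L => ¬ a = 0) = univ.erase 0 := by
    ext a; simp [Finset.mem_erase, and_comm]
  rw [h2, Finset.card_erase_of_mem (mem_univ _)]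
  simp [ZMod.card]

lemma sum_cnt_cube :
    (∑ a : ZMod L, (if a = 0 then 1 else 8) : ℕ) = L + 7 * (L - 1) := by
  have h : ∀ a : ZMod L, (if a = 0 then 1 else 8 : ℕ) = 1 + 7 * (if ¬ a = 0 then 1 else 0) := by
    intro a; by_cases h : a = 0 <;> simp [h]
  simp_rw [h]
  rw [Finset.sum_add_distrib, Finset.sum_const, ← Finset.mul_sum, Finset.sum_boole]
  have h2 : (univ.filter fun a : ZMod L => ¬ a = 0) = univ.erase 0 := by
    ext a; simp [Finset.mem_erase, and_comm]
  rw [h2, Finset.card_erase_of_mem (mem_univ _)]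
  simp [ZMod.card]

omit [NeZero L] in
lemma ind_and (p q : Prop) [Decidable p] [Decidable q] :
    (if p ∧ q then (1:ℕ) else 0) = (if p then 1 else 0) * (if q then 1 else 0) := by
  split_ifs <;> simp_all

lemma sum_rel_pair (hL : Odd L) :
    (∑ p : ZMod L × ZMod L, (if relc p.1 p.2 then 1 else 0) : ℕ) = L + (L - 1) := by
  rw [Fintype.sum_prod_type]
  simp_rw [cnt_lemma hL]
  exact sum_cnt

lemma card_A (hL : Odd L) :
    (∑ x : (ZMod L × ZMod L) × (ZMod L × ZMod L),
      (if relc x.1.1 x.2.1 ∧ relc x.1.2 x.2.2 then 1 else 0) : ℕ)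
      = (L + (L-1)) * (L + (L-1)) := by
  simp_rw [ind_and]
  calc (∑ x : (ZMod L × ZMod L) × (ZMod L × ZMod L),
        (if relc x.1.1 x.2.1 then 1 else 0) * (if relc x.1.2 x.2.2 then 1 else 0) : ℕ)
      = ∑ y : (ZMod L × ZMod L) × (ZMod L × ZMod L),
        (if relc y.1.1 y.1.2 then 1 else 0) * (if relc y.2.1 y.2.2 then 1 else 0) :=
        Fintype.sum_equiv (Equiv.prodProdProdComm (ZMod L) (ZMod L) (ZMod L) (ZMod L))
          _ _ (fun x => rfl)
    _ = (∑ p : ZMod L × ZMod L, (if relc p.1 p.2 then (1:ℕ) else 0))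
          * (∑ p : ZMod L × ZMod L, (if relc p.1 p.2 then (1:ℕ) else 0)) := by
        rw [Fintype.sum_prod_type]
        dsimp only
        rw [Finset.sum_mul_sum]
    _ = (L + (L-1)) * (L + (L-1)) := by rw [sum_rel_pair hL]

def swapEquiv (α : Type*) : ((α × α) × (α × α)) ≃ ((α × α) × (α × α)) where
  toFun x := ((x.1.1, x.2.2), (x.1.2, x.2.1))
  invFun y := ((y.1.1, y.2.1), (y.2.2, y.1.2))
  left_inv := fun ⟨⟨j,k⟩,⟨j',k'⟩⟩ => rfl
  right_inv := fun ⟨⟨j,k⟩,⟨j',k'⟩⟩ => rfl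

lemma card_B (hL : Odd L) :
    (∑ x : (ZMod L × ZMod L) × (ZMod L × ZMod L),
      (if relc x.1.1 x.2.2 ∧ relc x.1.2 x.2.1 then 1 else 0) : ℕ)
      = (L + (L-1)) * (L + (L-1)) := by
  simp_rw [ind_and]
  calc (∑ x : (ZMod L × ZMod L) × (ZMod L × ZMod L),
        (if relc x.1.1 x.2.2 then 1 else 0) * (if relc x.1.2 x.2.1 then 1 else 0) : ℕ)
      = ∑ y : (ZMod L × ZMod L) × (ZMod L × ZMod L),
        (if relc y.1.1 y.1.2 then 1 else 0) * (if relc y.2.1 y.2.2 then 1 else 0) :=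
        Fintype.sum_equiv (swapEquiv (ZMod L)) _ _ (fun x => rfl)
    _ = (∑ p : ZMod L × ZMod L, (if relc p.1 p.2 then (1:ℕ) else 0))
          * (∑ p : ZMod L × ZMod L, (if relc p.1 p.2 then (1:ℕ) else 0)) := by
        rw [Fintype.sum_prod_type]
        dsimp only
        rw [Finset.sum_mul_sum]
    _ = (L + (L-1)) * (L + (L-1)) := by rw [sum_rel_pair hL]

lemma card_AB (hL : Odd L) :
    (∑ x : (ZMod L × ZMod L) × (ZMod L × ZMod L),
      (if relc x.1.1 x.1.2 ∧ relc x.1.1 x.2.1 ∧ relc x.1.1 x.2.2 then 1 else 0) : ℕ)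
      = L + 7 * (L - 1) := by
  simp_rw [ind_and]
  rw [Fintype.sum_prod_type]
  simp_rw [Fintype.sum_prod_type]
  have inner : ∀ j : ZMod L,
      (∑ k : ZMod L, ∑ j' : ZMod L, ∑ k' : ZMod L,
        (if relc j k then 1 else 0)
          * ((if relc j j' then 1 else 0) * (if relc j k' then 1 else 0)) : ℕ)
      = if j = 0 then 1 else 8 := by
    intro j
    have step : (∑ k : ZMod L, ∑ j' : ZMod L, ∑ k' : ZMod L,
        (if relc j k then 1 else 0)
          * ((if relc j j' then 1 else 0) * (if relc j k' then 1 else 0)) : ℕ)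
        = (∑ k : ZMod L, (if relc j k then (1:ℕ) else 0))
            * ((∑ j' : ZMod L, (if relc j j' then (1:ℕ) else 0))
              * (∑ k' : ZMod L, (if relc j k' then (1:ℕ) else 0))) := by
      rw [Finset.sum_mul_sum, Finset.sum_mul]
      refine Finset.sum_congr rfl fun k _ => ?_
      rw [Finset.mul_sum]
      refine Finset.sum_congr rfl fun j' _ => ?_
      rw [Finset.mul_sum]
    rw [step, cnt_lemma hL]
    by_cases h : j = 0 <;> simp [h]
  simp_rw [inner]
  exact sum_cnt_cube

lemma AB_iff (x : (ZMod L × ZMod L) × (ZMod L × ZMod L)) :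
    ((relc x.1.1 x.2.1 ∧ relc x.1.2 x.2.2) ∧ (relc x.1.1 x.2.2 ∧ relc x.1.2 x.2.1))
      ↔ (relc x.1.1 x.1.2 ∧ relc x.1.1 x.2.1 ∧ relc x.1.1 x.2.2) := by
  constructor
  · rintro ⟨⟨hjj, hkk⟩, ⟨hjk, hkj⟩⟩
    exact ⟨relc_trans (relc_symm hjj) (relc_symm hkj), hjj, hjk⟩
  · rintro ⟨r1, r2, r3⟩
    exact ⟨⟨r2, relc_trans r1 r3⟩, ⟨r3, relc_trans r1 r2⟩⟩

lemma card_Rrel (hL : Odd L) :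
    Fintype.card {x : (ZMod L × ZMod L) × (ZMod L × ZMod L) // Rrel x.1 x.2}
      + (L + 7 * (L - 1))
      = (L + (L-1)) * (L + (L-1)) + (L + (L-1)) * (L + (L-1)) := by
  classical
  rw [Fintype.card_subtype]
  have hR : (univ.filter fun x : (ZMod L × ZMod L) × (ZMod L × ZMod L) => Rrel x.1 x.2)
      = (univ.filter fun x => (relc x.1.1 x.2.1 ∧ relc x.1.2 x.2.2))
        ∪ (univ.filter fun x => (relc x.1.1 x.2.2 ∧ relc x.1.2 x.2.1)) := by
    rw [← Finset.filter_or]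
    rfl
  rw [hR]
  have hunion := Finset.card_union_add_card_inter
    (univ.filter fun x : (ZMod L × ZMod L) × (ZMod L × ZMod L) =>
      (relc x.1.1 x.2.1 ∧ relc x.1.2 x.2.2))
    (univ.filter fun x => (relc x.1.1 x.2.2 ∧ relc x.1.2 x.2.1))
  rw [← Finset.filter_and] at hunion
  have hABcard : (univ.filter fun x : (ZMod L × ZMod L) × (ZMod L × ZMod L) =>
      ((relc x.1.1 x.2.1 ∧ relc x.1.2 x.2.2) ∧ (relc x.1.1 x.2.2 ∧ relc x.1.2 x.2.1))).card
      = L + 7 * (L - 1) := by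
    rw [show (univ.filter fun x : (ZMod L × ZMod L) × (ZMod L × ZMod L) =>
        ((relc x.1.1 x.2.1 ∧ relc x.1.2 x.2.2) ∧ (relc x.1.1 x.2.2 ∧ relc x.1.2 x.2.1)))
        = (univ.filter fun x => (relc x.1.1 x.1.2 ∧ relc x.1.1 x.2.1 ∧ relc x.1.1 x.2.2)) by
      ext x; simp only [Finset.mem_filter, mem_univ, true_and, AB_iff]]
    rw [Finset.card_filter]
    exact card_AB hL
  have hAcard : (univ.filter fun x : (ZMod L × ZMod L) × (ZMod L × ZMod L) =>
      (relc x.1.1 x.2.1 ∧ relc x.1.2 x.2.2)).card = (L + (L-1)) * (L + (L-1)) := by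
    rw [Finset.card_filter]; exact card_A hL
  have hBcard : (univ.filter fun x : (ZMod L × ZMod L) × (ZMod L × ZMod L) =>
      (relc x.1.1 x.2.2 ∧ relc x.1.2 x.2.1)).card = (L + (L-1)) * (L + (L-1)) := by
    rw [Finset.card_filter]; exact card_B hL
  rw [hABcard, hAcard, hBcard] at hunion
  exact hunion

end CountingLayer

/-- For `L ≥ 2` odd, the dimension of the commutant of `{u ⊗ u : u ∈ CU_Sym(L)}` equals
`8L² − 16L + 9`. -/
theorem dim_commutant_CUSym_second_tensor (L : ℕ) [NeZero L] (hL : Odd L) (hL2 : 2 ≤ L) :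
    Module.finrank ℂ
      (Submodule.span ℂ
        {T : Matrix (ZMod L × ZMod L) (ZMod L × ZMod L) ℂ |
          ∀ u : Matrix (ZMod L) (ZMod L) ℂ,
            u ∈ Matrix.unitaryGroup (ZMod L) ℂ →
            (∀ a b k : ZMod L, u (a + k) (b + k) = u a b) → uᵀ = u →
            T * (Matrix.of fun x y : ZMod L × ZMod L => u x.1 y.1 * u x.2 y.2)
              = (Matrix.of fun x y : ZMod L × ZMod L => u x.1 y.1 * u x.2 y.2) * T})
      = 8 * L ^ 2 - 16 * L + 9 := by
  have hset : {T : Matrix (ZMod L × ZMod L) (ZMod L × ZMod L) ℂ |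
          ∀ u : Matrix (ZMod L) (ZMod L) ℂ,
            u ∈ Matrix.unitaryGroup (ZMod L) ℂ →
            (∀ a b k : ZMod L, u (a + k) (b + k) = u a b) → uᵀ = u →
            T * (Matrix.of fun x y : ZMod L × ZMod L => u x.1 y.1 * u x.2 y.2)
              = (Matrix.of fun x y : ZMod L × ZMod L => u x.1 y.1 * u x.2 y.2) * T}
      = ↑(commMod L) := rfl
  rw [hset, Submodule.span_eq, finrank_commMod]
  have hcard := card_Rrel (L := L) hL
  obtain ⟨m, rfl⟩ : ∃ m, L = m + 2 := ⟨L - 2, by omega⟩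
  have e1 : (m + 2) - 1 = m + 1 := rfl
  rw [e1] at hcard
  have hs : (m + 2 + (m + 1)) * (m + 2 + (m + 1)) = 4 * (m * m) + 12 * m + 9 := by ring
  rw [hs] at hcard
  have hg : 8 * (m + 2) ^ 2 = 8 * (m * m) + 32 * m + 32 := by ring
  rw [hg]
  generalize m * m = t at hcard ⊢
  omega
end

section
/- The kernel of the linear map on ℂ^{L×L} given by c ↦ b where b_{p,q} = (1/L)Σ_{i,j} c_{i,j}( δ_{i,j}δ_{p,q} + δ_{i,p}δ_{j,q} − (1/L)δ_{i−j, p−q} ), with indices modulo L and L odd, is exactly the (L−1)-dimensional space of matrices c with zero diagonal whose off-diagonal entries depend only on the difference p−q modulo L, i.e., it is spanned by the circulant matrices T^k (powers of the shift) for k = 1,…,L−1. -/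
open Matrix

section KTPC

variable {L : ℕ} [NeZero L]

def KCond (c : Matrix (ZMod L) (ZMod L) ℂ) : Prop :=
  (∀ p, c p p = 0) ∧ ∀ p q p' q' : ZMod L, p - q = p' - q' → c p q = c p' q'

lemma Ksum (c : Matrix (ZMod L) (ZMod L) ℂ) (p q : ZMod L) :
    (∑ i : ZMod L, ∑ j : ZMod L,
      c i j * ((if i = j then 1 else 0) * (if p = q then 1 else 0)
        + (if i = p then 1 else 0) * (if j = q then 1 else 0)
        - (1 / L : ℂ) * (if i - j = p - q then 1 else 0)))
    = (if p = q then ∑ i : ZMod L, c i i else 0) + c p q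
        - (1 / L : ℂ) * ∑ i : ZMod L, c i (i - (p - q)) := by
  have hcond : ∀ i j : ZMod L, (i - j = p - q) = (j = i - (p - q)) := by
    intro i j
    simp only [eq_iff_iff]
    constructor <;> intro h <;> [skip; rw [h]] <;> [rw [← h]; skip] <;> ring
  simp only [hcond, mul_sub, mul_add, Finset.sum_sub_distrib, Finset.sum_add_distrib,
    mul_ite, ite_mul, mul_one, mul_zero, zero_mul, one_mul, Finset.sum_ite_eq,
    Finset.sum_ite_eq', Finset.mem_univ, if_true, Finset.mul_sum]
  ring_nf
  rw [add_comm (c p q)]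
  congr 1
  congr 1
  · split <;> simp [Finset.sum_ite_eq]
  · exact Finset.sum_congr rfl fun x _ => by ring

lemma hLC : (L : ℂ) ≠ 0 := Nat.cast_ne_zero.mpr (NeZero.ne L)

lemma Kpow (T : Matrix (ZMod L) (ZMod L) ℂ)
    (hT : ∀ i j : ZMod L, T i j = if j = i + 1 then 1 else 0) :
    ∀ (k : ℕ) (i j : ZMod L), (T ^ k) i j = if j = i + (k : ZMod L) then 1 else 0 := by
  intro k
  induction k with
  | zero => intro i j; simp [Matrix.one_apply, eq_comm]
  | succ n ih =>
    intro i j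
    rw [pow_succ, Matrix.mul_apply]
    simp only [ih, hT, ite_mul, one_mul, zero_mul, Finset.sum_ite_eq', Finset.mem_univ,
      if_true]
    push_cast
    rw [add_assoc]

lemma Kpow_mem (T : Matrix (ZMod L) (ZMod L) ℂ)
    (hT : ∀ i j : ZMod L, T i j = if j = i + 1 then 1 else 0)
    (k : ℕ) (hk1 : 1 ≤ k) (hk2 : k ≤ L - 1) : KCond (T ^ k) := by
  have hL1 : 1 ≤ L := Nat.one_le_iff_ne_zero.mpr (NeZero.ne L)
  have hkL : k < L := by omega
  have hkz : (k : ZMod L) ≠ 0 := by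
    rw [Ne, ZMod.natCast_eq_zero_iff]
    intro h
    exact absurd (Nat.le_of_dvd (by omega) h) (by omega)
  constructor
  · intro p
    rw [Kpow T hT, if_neg]
    intro h
    exact hkz (by linear_combination -h)
  · intro p q p' q' h
    rw [Kpow T hT, Kpow T hT]
    congr 1
    simp only [eq_iff_iff]
    constructor <;> intro hh
    · linear_combination hh + h
    · linear_combination hh - h
lemma Kker_cond (f : Matrix (ZMod L) (ZMod L) ℂ → Matrix (ZMod L) (ZMod L) ℂ)
    (hf : ∀ c p q, f c p q = (1 / L : ℂ) * ∑ i : ZMod L, ∑ j : ZMod L,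
      c i j * ((if i = j then 1 else 0) * (if p = q then 1 else 0)
        + (if i = p then 1 else 0) * (if j = q then 1 else 0)
        - (1 / L : ℂ) * (if i - j = p - q then 1 else 0)))
    (c : Matrix (ZMod L) (ZMod L) ℂ) (hc : f c = 0) : KCond c := by
  have hL : (L : ℂ) ≠ 0 := hLC
  have hE : ∀ p q : ZMod L, (if p = q then ∑ i : ZMod L, c i i else 0) + c p q
      - (1 / L : ℂ) * ∑ i : ZMod L, c i (i - (p - q)) = 0 := by
    intro p q
    have h0 : f c p q = 0 := by rw [hc]; rfl
    rw [hf, Ksum] at h0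
    rcases mul_eq_zero.mp h0 with h | h
    · exact absurd h (one_div_ne_zero hL)
    · exact h
  set t : ℂ := ∑ i : ZMod L, c i i with ht
  have hS0 : (∑ i : ZMod L, c i (i - (0 : ZMod L))) = t := by simp [ht]
  have hdiag : ∀ p : ZMod L, c p p = (1 / L : ℂ) * t - t := by
    intro p
    have := hE p p
    rw [if_pos rfl, sub_self, hS0] at this
    linear_combination this
  have htz : t = 0 := by
    have hsum : t = ∑ p : ZMod L, c p p := ht
    rw [Finset.sum_congr rfl (fun p _ => hdiag p), Finset.sum_const, Finset.card_univ,
      ZMod.card, nsmul_eq_mul] at hsum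
    have : (L : ℂ) * t = 0 := by
      field_simp at hsum
      linear_combination hsum
    rcases mul_eq_zero.mp this with h | h
    · exact absurd h hL
    · exact h
  have hdiag0 : ∀ p : ZMod L, c p p = 0 := by
    intro p; rw [hdiag p, htz]; ring
  refine ⟨hdiag0, ?_⟩
  intro p q p' q' h
  by_cases hpq : p = q
  · have hpq' : p' = q' := by
      subst hpq
      rw [show p' = q' + (p' - q') by ring, ← h]; ring
    rw [hpq, hpq', hdiag0, hdiag0]
  · have hpq' : p' ≠ q' := by
      intro hx
      apply hpq
      subst hx
      rw [show p = q + (p - q) by ring, h]; ring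
    have e1 := hE p q
    have e2 := hE p' q'
    rw [if_neg hpq] at e1
    rw [if_neg hpq'] at e2
    rw [h] at e1
    linear_combination e1 - e2

lemma Kcond_ker (f : Matrix (ZMod L) (ZMod L) ℂ → Matrix (ZMod L) (ZMod L) ℂ)
    (hf : ∀ c p q, f c p q = (1 / L : ℂ) * ∑ i : ZMod L, ∑ j : ZMod L,
      c i j * ((if i = j then 1 else 0) * (if p = q then 1 else 0)
        + (if i = p then 1 else 0) * (if j = q then 1 else 0)
        - (1 / L : ℂ) * (if i - j = p - q then 1 else 0)))
    (c : Matrix (ZMod L) (ZMod L) ℂ) (hc : KCond c) : f c = 0 := by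
  have hL : (L : ℂ) ≠ 0 := hLC
  ext p q
  rw [hf, Ksum]
  have ht : (∑ i : ZMod L, c i i) = 0 := by
    simp [hc.1]
  have hS : (∑ i : ZMod L, c i (i - (p - q))) = (L : ℂ) * c p q := by
    rw [Finset.sum_congr rfl (fun i _ => hc.2 i (i - (p - q)) p q (by ring)),
      Finset.sum_const, Finset.card_univ, ZMod.card, nsmul_eq_mul]
  rw [ht, hS, ite_self]
  field_simp
  simp

lemma Krepr (T : Matrix (ZMod L) (ZMod L) ℂ)
    (hT : ∀ i j : ZMod L, T i j = if j = i + 1 then 1 else 0)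
    (c : Matrix (ZMod L) (ZMod L) ℂ) (hc : KCond c) :
    c = ∑ k ∈ Finset.Icc 1 (L - 1), c 0 (k : ZMod L) • T ^ k := by
  have hL1 : 1 ≤ L := Nat.one_le_iff_ne_zero.mpr (NeZero.ne L)
  ext i j
  simp only [Matrix.sum_apply, Matrix.smul_apply, Kpow T hT, smul_eq_mul, mul_ite, mul_one, mul_zero]
  by_cases hij : j = i
  · subst hij
    rw [hc.1 j, Finset.sum_eq_zero]
    intro k hk
    rw [if_neg]
    intro h
    have hkz : (k : ZMod L) = 0 := by linear_combination -h
    rw [ZMod.natCast_eq_zero_iff] at hkz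
    simp only [Finset.mem_Icc] at hk
    exact absurd (Nat.le_of_dvd (by omega) hkz) (by omega)
  · have hd : j - i ≠ 0 := fun h => hij (by linear_combination h)
    have hval1 : 1 ≤ (j - i).val := by
      have h0 : (j - i).val ≠ 0 := fun h => hd ((ZMod.val_eq_zero _).mp h)
      omega
    have hvalL : (j - i).val < L := ZMod.val_lt _
    rw [Finset.sum_eq_single ((j - i).val)]
    · have hcast : (((j - i).val : ℕ) : ZMod L) = j - i := by
        rw [ZMod.natCast_val, ZMod.cast_id]
      rw [if_pos (by rw [hcast]; ring), hcast]
      exact hc.2 i j 0 (j - i) (by ring)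
    · intro k hk hkne
      simp only [Finset.mem_Icc] at hk
      rw [if_neg]
      intro h
      apply hkne
      have : (k : ZMod L) = ((j - i).val : ZMod L) := by
        rw [ZMod.natCast_val, ZMod.cast_id]
        linear_combination -h
      rw [ZMod.natCast_eq_natCast_iff, Nat.ModEq,
        Nat.mod_eq_of_lt (by omega), Nat.mod_eq_of_lt hvalL] at this
      exact this
    · intro h
      exact absurd (Finset.mem_Icc.mpr ⟨hval1, by omega⟩) h
noncomputable def KW (L : ℕ) [NeZero L] : Submodule ℂ (Matrix (ZMod L) (ZMod L) ℂ) where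
  carrier := {c | KCond c}
  add_mem' := by
    rintro a b ⟨ha1, ha2⟩ ⟨hb1, hb2⟩
    exact ⟨fun p => by simp [Matrix.add_apply, ha1 p, hb1 p],
      fun p q p' q' h => by simp [Matrix.add_apply, ha2 p q p' q' h, hb2 p q p' q' h]⟩
  zero_mem' := ⟨fun p => rfl, fun _ _ _ _ _ => rfl⟩
  smul_mem' := by
    rintro r a ⟨ha1, ha2⟩
    exact ⟨fun p => by simp [Matrix.smul_apply, ha1 p], fun p q p' q' h => by
      simp [Matrix.smul_apply, ha2 p q p' q' h]⟩

lemma Kfinrank (T : Matrix (ZMod L) (ZMod L) ℂ)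
    (hT : ∀ i j : ZMod L, T i j = if j = i + 1 then 1 else 0) :
    Module.finrank ℂ
      (Submodule.span ℂ
        {A : Matrix (ZMod L) (ZMod L) ℂ | ∃ k : ℕ, 1 ≤ k ∧ k ≤ L - 1 ∧ A = T ^ k})
      = L - 1 := by
  have hL1 : 1 ≤ L := Nat.one_le_iff_ne_zero.mpr (NeZero.ne L)
  set b : Fin (L - 1) → Matrix (ZMod L) (ZMod L) ℂ := fun m => T ^ ((m : ℕ) + 1) with hb
  have hset : {A : Matrix (ZMod L) (ZMod L) ℂ | ∃ k : ℕ, 1 ≤ k ∧ k ≤ L - 1 ∧ A = T ^ k}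
      = Set.range b := by
    ext A
    constructor
    · rintro ⟨k, h1, h2, rfl⟩
      refine ⟨⟨k - 1, by omega⟩, ?_⟩
      show T ^ ((k - 1) + 1) = T ^ k
      congr 1
      omega
    · rintro ⟨m, rfl⟩
      exact ⟨(m : ℕ) + 1, by omega, by have := m.2; omega, rfl⟩
  have hli : LinearIndependent ℂ b := by
    rw [Fintype.linearIndependent_iff]
    intro g hg m0
    have h0 := congrFun (congrFun hg 0) ((((m0 : ℕ) + 1 : ℕ) : ZMod L))
    simp only [Matrix.sum_apply, Matrix.smul_apply, hb, Kpow T hT, smul_eq_mul,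
      mul_ite, mul_one, mul_zero, Matrix.zero_apply, zero_add] at h0
    rw [Finset.sum_eq_single m0, if_pos rfl] at h0
    · exact h0
    · intro m _ hmne
      rw [if_neg]
      intro h
      apply hmne
      rw [ZMod.natCast_eq_natCast_iff, Nat.ModEq,
        Nat.mod_eq_of_lt (by have := m0.2; omega), Nat.mod_eq_of_lt (by have := m.2; omega)] at h
      exact Fin.ext (by omega)
    · intro h
      exact absurd (Finset.mem_univ m0) h
  rw [hset, finrank_span_eq_card hli, Fintype.card_fin]

/-- For `L` odd, the kernel of the map `c ↦ b`,
`b_{p,q} = (1/L) Σ_{i,j} c_{i,j}(δ_{i,j}δ_{p,q} + δ_{i,p}δ_{j,q} − (1/L)δ_{i−j,p−q})`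
(the 2-point measurement-channel coefficient map), is exactly the `(L−1)`-dimensional space
spanned by the powers `T^k`, `k = 1,…,L−1`, of the cyclic shift `T` — i.e. the matrices with
zero diagonal whose off-diagonal entries depend only on the difference of the indices. -/
theorem kernel_of_two_point_channel (L : ℕ) [NeZero L] (hL : Odd L)
    (f : Matrix (ZMod L) (ZMod L) ℂ → Matrix (ZMod L) (ZMod L) ℂ)
    (hf : ∀ c p q, f c p q = (1 / L : ℂ) * ∑ i : ZMod L, ∑ j : ZMod L,
      c i j * ((if i = j then 1 else 0) * (if p = q then 1 else 0)
        + (if i = p then 1 else 0) * (if j = q then 1 else 0)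
        - (1 / L : ℂ) * (if i - j = p - q then 1 else 0)))
    (T : Matrix (ZMod L) (ZMod L) ℂ)
    (hT : ∀ i j : ZMod L, T i j = if j = i + 1 then 1 else 0) :
    {c : Matrix (ZMod L) (ZMod L) ℂ | f c = 0}
      = ↑(Submodule.span ℂ
          {A : Matrix (ZMod L) (ZMod L) ℂ | ∃ k : ℕ, 1 ≤ k ∧ k ≤ L - 1 ∧ A = T ^ k}) ∧
    Module.finrank ℂ
      (Submodule.span ℂ
        {A : Matrix (ZMod L) (ZMod L) ℂ | ∃ k : ℕ, 1 ≤ k ∧ k ≤ L - 1 ∧ A = T ^ k})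
      = L - 1 := by
  refine ⟨?_, Kfinrank T hT⟩
  ext c
  simp only [Set.mem_setOf_eq, SetLike.mem_coe]
  constructor
  · intro hc
    rw [Krepr T hT c (Kker_cond f hf c hc)]
    refine Submodule.sum_mem _ fun k hk => Submodule.smul_mem _ _ (Submodule.subset_span ?_)
    simp only [Finset.mem_Icc] at hk
    exact ⟨k, hk.1, hk.2, rfl⟩
  · intro hc
    apply Kcond_ker f hf
    have hle : Submodule.span ℂ
        {A : Matrix (ZMod L) (ZMod L) ℂ | ∃ k : ℕ, 1 ≤ k ∧ k ≤ L - 1 ∧ A = T ^ k} ≤ KW L := by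
      rw [Submodule.span_le]
      rintro A ⟨k, h1, h2, rfl⟩
      exact Kpow_mem T hT k h1 h2
    exact hle hc

end KTPC
end

section
/- For L odd, the image of the self-adjoint linear map M^{(2)} on ℂ^{L×L} (with entries M^{(2)}_{ij,lm} = (1/L)(δ_{i,j}δ_{l,m} + δ_{i,l}δ_{j,m} − (1/L)δ_{i−j,l−m})) is exactly the set of matrices b satisfying Σ_{i=0}^{L−1} b_{i,i+k} = 0 for every k ∈ {1,…,L−1}; equivalently, it is the orthogonal complement of span{T^k : 1 ≤ k ≤ L−1} with respect to the trace inner product. -/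
open Matrix

lemma imgch_form (L : ℕ) [NeZero L] (c : Matrix (ZMod L) (ZMod L) ℂ) (l m : ZMod L) :
    (∑ i : ZMod L, ∑ j : ZMod L,
      ((1 / L : ℂ) * ((if i = j then 1 else 0) * (if l = m then 1 else 0)
        + (if i = l then 1 else 0) * (if j = m then 1 else 0)
        - (1 / L : ℂ) * (if i - j = l - m then 1 else 0))) * c i j)
    = (1/L : ℂ) * ((if l = m then 1 else 0) * (∑ i : ZMod L, c i i) + c l m
        - (1/L) * ∑ i : ZMod L, c i (i - (l - m))) := by
  have key : ∀ i j : ZMod L, (i - j = l - m) ↔ (j = i - (l - m)) := by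
    intro i j
    constructor <;> intro h <;> [skip; rw [h]] <;> [rw [← h]; ring] <;> ring
  have h1 : ∀ i : ZMod L, ∑ j : ZMod L,
      ((1 / L : ℂ) * ((if i = j then 1 else 0) * (if l = m then 1 else 0)
        + (if i = l then 1 else 0) * (if j = m then 1 else 0)
        - (1 / L : ℂ) * (if i - j = l - m then 1 else 0))) * c i j
      = (1/L : ℂ) * ((if l = m then 1 else 0) * c i i
        + (if i = l then 1 else 0) * c i m
        - (1/L) * c i (i - (l - m))) := by
    intro i
    simp only [key]
    simp [mul_ite, ite_mul, mul_comm, mul_sub, mul_add, Finset.sum_sub_distrib,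
      Finset.sum_add_distrib, Finset.sum_ite_eq, Finset.sum_ite_eq']
    ring
  rw [Finset.sum_congr rfl fun i _ => h1 i]
  simp [Finset.sum_sub_distrib, Finset.sum_add_distrib, Finset.mul_sum, Finset.sum_ite_eq',
    ite_mul, mul_add, mul_sub]

lemma imgch_Tpow (L : ℕ) [NeZero L] (T : Matrix (ZMod L) (ZMod L) ℂ)
    (hT : ∀ i j : ZMod L, T i j = if j = i + 1 then 1 else 0) (k : ℕ) :
    ∀ i j : ZMod L, (T ^ k) i j = if j = i + k then 1 else 0 := by
  induction k with
  | zero => intro i j; simp [Matrix.one_apply, eq_comm]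
  | succ n ih =>
    intro i j
    rw [pow_succ, Matrix.mul_apply]
    simp only [ih, hT, ite_mul, one_mul, zero_mul, Finset.sum_ite_eq', Finset.mem_univ, if_true]
    push_cast
    rw [add_assoc]

lemma imgch_trace (L : ℕ) [NeZero L] (A b : Matrix (ZMod L) (ZMod L) ℂ) (k : ℕ)
    (hA : ∀ i j : ZMod L, A i j = if j = i + k then 1 else 0) :
    Matrix.trace (star A * b) = ∑ i : ZMod L, b i (i + k) := by
  simp only [Matrix.trace, Matrix.diag, Matrix.mul_apply, Matrix.star_apply, hA]
  rw [Finset.sum_comm]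
  simp [apply_ite, eq_comm]

/-- For `L` odd, the image of the self-adjoint map `M^{(2)}` with entries
`M^{(2)}_{ij,lm} = (1/L)(δ_{i,j}δ_{l,m} + δ_{i,l}δ_{j,m} − (1/L)δ_{i−j,l−m})` is exactly the
set of matrices `b` with `Σ_i b_{i,i+k} = 0` for all `k ≠ 0` mod `L`; equivalently, the
orthogonal complement of `span{T^k : 1 ≤ k ≤ L−1}` for the trace inner product, `T` the shift. -/
theorem image_of_two_point_channel (L : ℕ) [NeZero L] (hL : Odd L)
    (f : Matrix (ZMod L) (ZMod L) ℂ → Matrix (ZMod L) (ZMod L) ℂ)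
    (hf : ∀ c l m, f c l m = ∑ i : ZMod L, ∑ j : ZMod L,
      ((1 / L : ℂ) * ((if i = j then 1 else 0) * (if l = m then 1 else 0)
        + (if i = l then 1 else 0) * (if j = m then 1 else 0)
        - (1 / L : ℂ) * (if i - j = l - m then 1 else 0))) * c i j)
    (T : Matrix (ZMod L) (ZMod L) ℂ)
    (hT : ∀ i j : ZMod L, T i j = if j = i + 1 then 1 else 0) :
    Set.range f
      = {b : Matrix (ZMod L) (ZMod L) ℂ |
          ∀ k : ZMod L, k ≠ 0 → ∑ i : ZMod L, b i (i + k) = 0} ∧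
    Set.range f
      = {b : Matrix (ZMod L) (ZMod L) ℂ |
          ∀ k : ℕ, 1 ≤ k → k ≤ L - 1 → Matrix.trace (star (T ^ k) * b) = 0} := by
  have hLC : (L : ℂ) ≠ 0 := Nat.cast_ne_zero.mpr (NeZero.ne L)
  have hform : ∀ c l m, f c l m
      = (1/L : ℂ) * ((if l = m then 1 else 0) * (∑ i : ZMod L, c i i) + c l m
        - (1/L) * ∑ i : ZMod L, c i (i - (l - m))) := by
    intro c l m; rw [hf]; exact imgch_form L c l m
  have hcard : (Finset.univ : Finset (ZMod L)).card = L := by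
    simp [ZMod.card]
  have hset1 : Set.range f
      = {b : Matrix (ZMod L) (ZMod L) ℂ |
          ∀ k : ZMod L, k ≠ 0 → ∑ i : ZMod L, b i (i + k) = 0} := by
    ext b
    constructor
    · rintro ⟨c, rfl⟩ k hk
      have h0 : ∀ i : ZMod L, f c i (i + k)
          = (1/L : ℂ) * (c i (i + k) - (1/L) * ∑ j : ZMod L, c j (j + k)) := by
        intro i
        rw [hform]
        have h1 : (i = i + k) = False := by
          simp [eq_comm, hk]
        have h2 : i - (i + k) = -k := by ring
        rw [h2]
        simp only [h1, if_false, zero_mul, zero_add, sub_neg_eq_add]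
      rw [Finset.sum_congr rfl fun i _ => h0 i]
      rw [← Finset.mul_sum, Finset.sum_sub_distrib, Finset.sum_const, hcard]
      field_simp
      rw [nsmul_eq_mul, mul_div_assoc', mul_div_cancel_left₀ _ hLC]; ring
    · intro hb
      set tr : ℂ := ∑ i : ZMod L, b i i with htr
      refine ⟨fun i j => (L : ℂ) * b i j - (if i = j then ((L : ℂ) - 1)/L * tr else 0), ?_⟩
      funext l m
      refine (hform _ l m).trans ?_
      have hdiag : ∑ i : ZMod L,
          ((L : ℂ) * b i i - ((L : ℂ) - 1)/L * tr) = tr := by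
        rw [Finset.sum_sub_distrib, ← Finset.mul_sum, Finset.sum_const, hcard, ← htr]
        field_simp
        linear_combination (tr - (L:ℂ)*tr) * mul_inv_cancel₀ hLC
      have hoff : ∑ i : ZMod L,
          ((L : ℂ) * b i (i - (l - m)) - (if i = i - (l - m) then ((L : ℂ) - 1)/L * tr else 0))
          = if l = m then tr else 0 := by
        by_cases hlm : l = m
        · simp only [hlm, sub_self, sub_zero, if_true]
          simpa using hdiag
        · have hd : l - m ≠ 0 := sub_ne_zero.mpr hlm
          have h2 : ∀ i : ZMod L, (i = i - (l - m)) = False := by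
            intro i
            simp only [eq_iff_iff, iff_false]
            intro h
            exact hd (by linear_combination h)
          simp only [h2, if_false, sub_zero, hlm]
          rw [← Finset.mul_sum]
          have : ∑ i : ZMod L, b i (i - (l - m)) = 0 := by
            have := hb (-(l - m)) (neg_ne_zero.mpr hd)
            simpa [sub_eq_add_neg] using this
          rw [this, mul_zero]
      simp only [eq_self_iff_true, if_true] at hoff ⊢
      rw [hdiag, hoff]
      by_cases hlm : l = m
      · simp only [hlm, if_true]
        field_simp
        ring
      · simp only [hlm, if_false]
        field_simp
        ring
  refine ⟨hset1, ?_⟩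
  rw [hset1]
  ext b
  simp only [Set.mem_setOf_eq]
  constructor
  · intro hb k hk1 hk2
    rw [imgch_trace L _ b k (imgch_Tpow L T hT k)]
    apply hb
    intro h
    rw [ZMod.natCast_eq_zero_iff] at h
    have hkL : k < L := lt_of_le_of_lt hk2 (Nat.sub_lt (Nat.pos_of_ne_zero (NeZero.ne L)) one_pos)
    exact absurd (Nat.le_of_dvd (by omega) h) (by omega)
  · intro hb k hk
    have hv1 : 1 ≤ k.val := by
      rcases Nat.eq_zero_or_pos k.val with h | h
      · exact absurd ((ZMod.val_eq_zero k).mp h) hk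
      · exact h
    have hv2 : k.val ≤ L - 1 := by
      have := ZMod.val_lt k
      omega
    have := hb k.val hv1 hv2
    rw [imgch_trace L _ b k.val (imgch_Tpow L T hT k.val)] at this
    simpa [ZMod.natCast_val, ZMod.cast_id] using this
end

section
/- For L odd and i ≠ j (mod L), the matrix E_{ij} − E_{L−1, j−i−1} (where E_{pq} is the matrix unit and j−i−1 is taken modulo L) is an eigenvector of the linear map M^{(2)} with entries M^{(2)}_{ij,lm} = (1/L)(δ_{i,j}δ_{l,m} + δ_{i,l}δ_{j,m} − (1/L)δ_{i−j,l−m}), with eigenvalue 1/L. -/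
open Matrix

/-- For `L` odd and `i ≠ j` mod `L`, the matrix `E_{ij} − E_{L−1, j−i−1}` is an eigenvector
of the map `M^{(2)}` (with entries
`M^{(2)}_{ij,lm} = (1/L)(δ_{i,j}δ_{l,m} + δ_{i,l}δ_{j,m} − (1/L)δ_{i−j,l−m})`) with
eigenvalue `1/L`. Here `L−1 = −1` in `ZMod L` and `j−i−1` is taken modulo `L`. -/
theorem eigenvector_of_two_point_channel (L : ℕ) [NeZero L] (hL : Odd L)
    (i j : ZMod L) (hij : i ≠ j)
    (f : Matrix (ZMod L) (ZMod L) ℂ → Matrix (ZMod L) (ZMod L) ℂ)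
    (hf : ∀ c l m, f c l m = ∑ i' : ZMod L, ∑ j' : ZMod L,
      ((1 / L : ℂ) * ((if i' = j' then 1 else 0) * (if l = m then 1 else 0)
        + (if i' = l then 1 else 0) * (if j' = m then 1 else 0)
        - (1 / L : ℂ) * (if i' - j' = l - m then 1 else 0))) * c i' j') :
    f (Matrix.single i j (1 : ℂ)
        - Matrix.single (-1 : ZMod L) (j - i - 1) (1 : ℂ))
      = (1 / L : ℂ) • (Matrix.single i j (1 : ℂ)
        - Matrix.single (-1 : ZMod L) (j - i - 1) (1 : ℂ)) := by
  funext l m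
  rw [hf]
  simp only [Matrix.sub_apply, Matrix.single, Matrix.smul_apply, Matrix.of_apply,
    smul_eq_mul]
  simp only [mul_sub, sub_mul, add_mul, mul_ite, ite_mul, mul_one, mul_zero, one_mul, zero_mul,
    Finset.sum_sub_distrib, Finset.sum_add_distrib]
  have h1 : (-1 : ZMod L) - (j - i - 1) = i - j := by ring
  have h2 : (-1 : ZMod L) ≠ j - i - 1 := fun h => hij (by linear_combination h)
  have h3 : i ≠ j := hij
  simp only [ite_and, Finset.sum_ite_eq, Finset.sum_ite_eq']
  simp [h1, h2, hij, eq_comm]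
  clear hf
  split_ifs <;> rfl
end

section
/- Let M be a self-adjoint linear map (measurement channel) on operators with Moore–Penrose pseudo-inverse M⁺, and let P be the orthogonal projector onto the image of M. For a quantum state ρ and operator O, if U is sampled from an ensemble U and n is measured in the computational basis of U ρ U†, then the single-shot estimator X_{U,n} = ⟨n| U M⁺(O) U† |n⟩ satisfies E_{U,n}[X_{U,n}] = Tr(P(O) ρ). -/
open Matrix MeasureTheory
open scoped ComplexOrder

/-- Classical-shadows unbiasedness: for the measurement channel
`M(X) = Σ_n E_U ⟨n|UXU†|n⟩ U†|n⟩⟨n|U` of an ensemble of unitaries, with `M⁺` its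
Moore–Penrose pseudo-inverse so that `M(M⁺(O)) = P(O)` with `P` the orthogonal projector
onto the image of `M`, the single-shot estimator `X_{U,n} = ⟨n|U M⁺(O) U†|n⟩` satisfies
`E_{U,n}[X_{U,n}] = Tr(P(O) ρ)`, where `n` is measured in the computational basis of
`U ρ U†`. -/
theorem shadow_estimator_unbiased (ι : Type*) [Fintype ι] [DecidableEq ι]
    (Ω : Type*) [MeasurableSpace Ω] (P : Measure Ω) [IsProbabilityMeasure P]
    (U : Ω → Matrix ι ι ℂ) (hUuni : ∀ ω, U ω ∈ Matrix.unitaryGroup ι ℂ)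
    (ρ O : Matrix ι ι ℂ) (hρpos : ρ.PosSemidef) (hρtr : ρ.trace = 1)
    (Mch Mp Pim : Matrix ι ι ℂ → Matrix ι ι ℂ)
    (hMch : ∀ X x y, Mch X x y = ∑ n : ι,
      ∫ ω, (U ω * X * star (U ω)) n n *
        ((star (U ω) * Matrix.single n n (1 : ℂ) * U ω : Matrix ι ι ℂ) x y) ∂P)
    (hproj : Mch (Mp O) = Pim O)
    (hInt : ∀ (X : Matrix ι ι ℂ) (n x y : ι),
      Integrable (fun ω => (U ω * X * star (U ω)) n n *
        ((star (U ω) * Matrix.single n n (1 : ℂ) * U ω : Matrix ι ι ℂ) x y)) P) :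
    ∑ n : ι, ∫ ω, (U ω * ρ * star (U ω)) n n * ((U ω * Mp O * star (U ω)) n n) ∂P
      = Matrix.trace (Pim O * ρ) := by
  rw [← hproj]
  have key : ∀ (ω : Ω) (n : ι),
      ∑ x : ι, ∑ y : ι, (U ω * Mp O * star (U ω)) n n *
        ((star (U ω) * Matrix.single n n (1 : ℂ) * U ω : Matrix ι ι ℂ) x y) * ρ y x
      = (U ω * ρ * star (U ω)) n n * ((U ω * Mp O * star (U ω)) n n) := by
    intro ω n
    have h1 : ∑ x : ι, ∑ y : ι,
        ((star (U ω) * Matrix.single n n (1 : ℂ) * U ω : Matrix ι ι ℂ) x y) * ρ y x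
        = Matrix.trace ((star (U ω) * Matrix.single n n (1 : ℂ) * U ω) * ρ) := by
      simp [Matrix.trace, Matrix.mul_apply]
    have h2 : Matrix.trace ((star (U ω) * Matrix.single n n (1 : ℂ) * U ω) * ρ)
        = (U ω * ρ * star (U ω)) n n := by
      rw [show (star (U ω) * Matrix.single n n (1 : ℂ) * U ω) * ρ
          = star (U ω) * (Matrix.single n n (1 : ℂ) * (U ω * ρ)) by simp [mul_assoc],
        Matrix.trace_mul_comm]
      simp [Matrix.trace, Matrix.diag, Matrix.mul_apply, Matrix.single, ite_and, Finset.sum_ite_eq, Finset.mul_sum, Finset.sum_ite_eq']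
    calc ∑ x : ι, ∑ y : ι, (U ω * Mp O * star (U ω)) n n *
          ((star (U ω) * Matrix.single n n (1 : ℂ) * U ω : Matrix ι ι ℂ) x y) * ρ y x
        = (U ω * Mp O * star (U ω)) n n * ∑ x : ι, ∑ y : ι,
          ((star (U ω) * Matrix.single n n (1 : ℂ) * U ω : Matrix ι ι ℂ) x y) * ρ y x := by
          rw [Finset.mul_sum]; congr 1; ext x; rw [Finset.mul_sum]; congr 1; ext y; ring
      _ = (U ω * ρ * star (U ω)) n n * ((U ω * Mp O * star (U ω)) n n) := by
          rw [h1, h2]; ring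
  calc ∑ n : ι, ∫ ω, (U ω * ρ * star (U ω)) n n * ((U ω * Mp O * star (U ω)) n n) ∂P
      = ∑ n : ι, ∫ ω, ∑ x : ι, ∑ y : ι, (U ω * Mp O * star (U ω)) n n *
          ((star (U ω) * Matrix.single n n (1 : ℂ) * U ω : Matrix ι ι ℂ) x y) * ρ y x ∂P := by
        refine Finset.sum_congr rfl fun n _ => integral_congr_ae (Filter.Eventually.of_forall fun ω => ?_)
        exact (key ω n).symm
    _ = ∑ n : ι, ∑ x : ι, ∑ y : ι, (∫ ω, (U ω * Mp O * star (U ω)) n n *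
          ((star (U ω) * Matrix.single n n (1 : ℂ) * U ω : Matrix ι ι ℂ) x y) ∂P) * ρ y x := by
        refine Finset.sum_congr rfl fun n _ => ?_
        rw [integral_finset_sum]
        · refine Finset.sum_congr rfl fun x _ => ?_
          rw [integral_finset_sum]
          · exact Finset.sum_congr rfl fun y _ => integral_mul_const _ _
          · exact fun y _ => (hInt (Mp O) n x y).mul_const _
        · exact fun x _ => integrable_finset_sum _ fun y _ => (hInt (Mp O) n x y).mul_const _
    _ = Matrix.trace (Mch (Mp O) * ρ) := by
        rw [Finset.sum_comm]
        simp only [Matrix.trace, Matrix.diag, Matrix.mul_apply, hMch, Finset.sum_mul]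
        rw [Finset.sum_congr rfl fun x _ => Finset.sum_comm]
end
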